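/- arXiv:2402.01561 — 7 statements merged into one kernel-verified Lean document; each statement's English description precedes it below -/
import Mathlib

section
/- For every β ∈ ℝ, every ε > 0 and every τ ∈ ℝ, the cubic polynomial z³ + βz + (ε + iτ) over ℂ has no root with real part equal to zero, and, counting multiplicities, it has exactly one root with negative real part and exactly two roots with positive real part. -/
open Polynomial in
lemma exists_cubic_root (B C : ℂ) : ∃ a : ℂ, a^3 + B*a + C = 0 := by
  have hdeg : (X^3 + Polynomial.C B * X + Polynomial.C C : ℂ[X]).degree = 3 := by
    compute_degree!
  obtain ⟨a, ha⟩ := Complex.exists_root (f := X^3 + Polynomial.C B * X + Polynomial.C C)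
    (by rw [hdeg]; norm_num)
  refine ⟨a, ?_⟩
  have := ha
  simp [Polynomial.IsRoot, Polynomial.eval_add, Polynomial.eval_pow] at this
  linear_combination this

lemma cubic_factor (B C : ℂ) :
    ∃ a b c : ℂ, ∀ z : ℂ, z^3 + B*z + C = (z-a)*(z-b)*(z-c) := by
  obtain ⟨a, ha⟩ := exists_cubic_root B C
  obtain ⟨d, hd⟩ := IsAlgClosed.exists_pow_nat_eq (a^2 - 4*(a^2+B)) (n := 2) (by norm_num)
  refine ⟨a, (-a+d)/2, (-a-d)/2, fun z => ?_⟩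
  linear_combination ha + ((z-a)/4) * hd

lemma two_neg_false (ε x0 x1 x2 y0 y1 y2 : ℝ) (hε : 0 < ε)
    (h1 : x0 + x1 + x2 = 0) (h2 : y0 + y1 + y2 = 0)
    (h3 : x0*y1 + x1*y0 + x0*y2 + x2*y0 + x1*y2 + x2*y1 = 0)
    (h4 : x0*x1*x2 - x0*y1*y2 - x1*y0*y2 - x2*y0*y1 = -ε)
    (hx0 : x0 < 0) (hx1 : x1 < 0) : False := by
  have hx2 : x2 = -x0 - x1 := by linarith
  have hy2 : y2 = -y0 - y1 := by linarith
  subst hx2 hy2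
  have key : (-ε) * (x0 + 2*x1)^2
      = -x0*x1*(x0+x1)*(x0+2*x1)^2 - 9*x0*x1*(x0+x1)*y0^2 := by
    linear_combination (-(x0+2*x1)^2) * h4 - (x1*(5*x0+4*x1)*y0 + x0*(x0+2*x1)*y1) * h3
  have hP : 0 < -x0*x1*(x0+x1) := by
    nlinarith [mul_pos (neg_pos.2 hx0) (neg_pos.2 hx1)]
  have hB2 : 0 < (x0 + 2*x1)^2 := by nlinarith
  nlinarith [mul_pos hP hB2, mul_pos hε hB2, mul_nonneg hP.le (sq_nonneg y0)]

/-- Root structure of the cubic `z³ + βz + (ε + iτ)` for `ε > 0`: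
no root is purely imaginary (real part zero), and, counting
multiplicities, exactly one root has negative real part and exactly two
roots have positive real part. -/
theorem cubic_root_structure (β ε τ : ℝ) (hε : 0 < ε) :
    (∀ z : ℂ, z^3 + (β : ℂ) * z + ((ε : ℂ) + (τ : ℂ) * Complex.I) = 0 → z.re ≠ 0) ∧
    ∃ z₀ z₁ z₂ : ℂ, z₀.re < 0 ∧ 0 < z₁.re ∧ 0 < z₂.re ∧
      ∀ z : ℂ, z^3 + (β : ℂ) * z + ((ε : ℂ) + (τ : ℂ) * Complex.I)
        = (z - z₀) * (z - z₁) * (z - z₂) := by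
  have h1 : ∀ z : ℂ, z^3 + (β : ℂ) * z + ((ε : ℂ) + (τ : ℂ) * Complex.I) = 0 → z.re ≠ 0 := by
    intro z hz hre
    have h := congrArg Complex.re hz
    simp [pow_succ, Complex.add_re, Complex.mul_re, Complex.mul_im, hre] at h
    linarith
  refine ⟨h1, ?_⟩
  obtain ⟨a, b, c, hf⟩ := cubic_factor (β : ℂ) ((ε : ℂ) + (τ : ℂ) * Complex.I)
  have e1 : a + b + c = 0 := by linear_combination (hf 1 + hf (-1)) / 2 - hf 0
  have e2 : a*b + a*c + b*c = (β : ℂ) := by linear_combination (hf (-1) - hf 1) / 2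
  have e3 : a*b*c = -((ε : ℂ) + (τ : ℂ) * Complex.I) := by linear_combination hf 0
  have r1 : a.re + b.re + c.re = 0 := by
    have := congrArg Complex.re e1; simpa using this
  have i1 : a.im + b.im + c.im = 0 := by
    have := congrArg Complex.im e1; simpa using this
  have h3' : a.re*b.im + b.re*a.im + a.re*c.im + c.re*a.im + b.re*c.im + c.re*b.im = 0 := by
    have := congrArg Complex.im e2
    simp [Complex.mul_im, Complex.mul_re, Complex.add_im] at this
    linear_combination this
  have h4' : a.re*b.re*c.re - a.re*b.im*c.im - b.re*a.im*c.im - c.re*a.im*b.im = -ε := by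
    have := congrArg Complex.re e3
    simp [Complex.mul_im, Complex.mul_re, Complex.add_re, Complex.neg_re] at this
    linear_combination this
  have ra : a.re ≠ 0 := h1 a (by rw [hf a]; ring)
  have rb : b.re ≠ 0 := h1 b (by rw [hf b]; ring)
  have rc : c.re ≠ 0 := h1 c (by rw [hf c]; ring)
  rcases lt_or_gt_of_ne ra with hA | hA
  · have hB : 0 < b.re := by
      rcases lt_or_gt_of_ne rb with h | h
      · exact absurd (two_neg_false ε a.re b.re c.re a.im b.im c.im hε r1 i1 h3' h4' hA h) not_false
      · exact h
    have hC : 0 < c.re := by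
      rcases lt_or_gt_of_ne rc with h | h
      · exact absurd (two_neg_false ε a.re c.re b.re a.im c.im b.im hε (by linarith) (by linarith)
          (by linear_combination h3') (by linear_combination h4') hA h) not_false
      · exact h
    exact ⟨a, b, c, hA, hB, hC, fun z => hf z⟩
  · rcases lt_or_gt_of_ne rb with hB | hB
    · have hC : 0 < c.re := by
        rcases lt_or_gt_of_ne rc with h | h
        · exact absurd (two_neg_false ε b.re c.re a.re b.im c.im a.im hε (by linarith) (by linarith)
            (by linear_combination h3') (by linear_combination h4') hB h) not_false
        · exact h
      exact ⟨b, a, c, hB, hA, hC, fun z => by rw [hf z]; ring⟩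
    · have hC : c.re < 0 := by
        rcases lt_or_gt_of_ne rc with h | h
        · exact h
        · linarith
      exact ⟨c, a, b, hC, hA, hB, fun z => by rw [hf z]; ring⟩
end

section
/- Let β < 0. Then: (i) the map φ_β(ξ) = ξ³ - βξ is a strictly increasing bijection of ℝ onto ℝ; denote its inverse by k_β. (ii) For every τ ∈ ℝ, the purely imaginary number z = i·k_β(τ) is a root of z³ + βz + iτ = 0, and it is the unique root with real part equal to zero. (iii) For every τ ∈ ℝ the other two roots are simple, and exactly one of them has negative real part while the other has positive real part. -/
/-! With `k = φ_β⁻¹(τ)`, `z³ + βz + iτ = (z - ik)(z² + ikz + (β - k²))`. The quadratic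
factor has discriminant `3k² - 4β > 0`, so with `s = √(3k² - 4β)` its roots are
`(±s - ik)/2`, with real parts `±s/2`. -/

open Filter Complex

lemma strictMono_cube_sub_mul {β : ℝ} (hβ : β ≤ 0) : StrictMono (fun ξ : ℝ => ξ ^ 3 - β * ξ) := by
  simp_rw [sub_eq_add_neg, ← neg_mul]
  exact (Odd.strictMono_pow (by decide)).add_monotone
    fun _ _ h => mul_le_mul_of_nonneg_left h (neg_nonneg.mpr hβ)

lemma tendsto_cube_sub_mul_atTop (β : ℝ) : Tendsto (fun ξ : ℝ => ξ ^ 3 - β * ξ) atTop atTop := by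
  have hsq : Tendsto (fun ξ : ℝ => ξ ^ 2 - β) atTop atTop :=
    tendsto_atTop_add_const_right _ _ (tendsto_pow_atTop two_ne_zero)
  convert tendsto_id.atTop_mul_atTop₀ hsq using 1
  ext ξ; simp only [id]; ring

lemma surjective_cube_sub_mul (β : ℝ) : Function.Surjective (fun ξ : ℝ => ξ ^ 3 - β * ξ) := by
  have hodd : (fun ξ : ℝ => ξ ^ 3 - β * ξ) = fun ξ => -((-ξ) ^ 3 - β * -ξ) := by
    ext ξ; ring
  refine Continuous.surjective (by fun_prop) (tendsto_cube_sub_mul_atTop β) ?_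
  rw [hodd]
  exact tendsto_neg_atTop_atBot.comp ((tendsto_cube_sub_mul_atTop β).comp tendsto_neg_atBot_atTop)

lemma cube_add_mul_add_I_mul_eq_mul (β τ k s z : ℂ) (hk : k ^ 3 - β * k = τ)
    (hs : s ^ 2 = 3 * k ^ 2 - 4 * β) :
    z ^ 3 + β * z + I * τ = (z - I * k) * (z - (-s - I * k) / 2) * (z - (s - I * k) / 2) := by
  linear_combination (z - I * k) / 4 * hs - I * hk + (3 * z * k ^ 2 / 4 + I * k ^ 3 / 4) * I_sq

lemma re_sub_I_mul_div_two (s k : ℝ) : ((s - I * k) / 2 : ℂ).re = s / 2 := by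
  simp

/-- For `β < 0`: the map `φ_β(ξ) = ξ³ - βξ` is a strictly increasing bijection
of `ℝ`, and for each `τ ∈ ℝ` the number `i·k_β(τ)` (with `k_β = φ_β⁻¹`) is the
unique purely imaginary root of `z³ + βz + iτ = 0`; the other two roots are
simple, one with negative and one with positive real part. -/
theorem cubic_root_structure_epsilon_zero (β : ℝ) (hβ : β < 0) :
    StrictMono (fun ξ : ℝ => ξ^3 - β * ξ) ∧
    Function.Bijective (fun ξ : ℝ => ξ^3 - β * ξ) ∧
    ∀ τ : ℝ,
      (Complex.I * (Function.invFun (fun ξ : ℝ => ξ^3 - β * ξ) τ : ℝ))^3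
          + (β : ℂ) * (Complex.I * (Function.invFun (fun ξ : ℝ => ξ^3 - β * ξ) τ : ℝ))
          + Complex.I * (τ : ℂ) = 0 ∧
      (∀ z : ℂ, z^3 + (β : ℂ) * z + Complex.I * (τ : ℂ) = 0 → z.re = 0 →
        z = Complex.I * (Function.invFun (fun ξ : ℝ => ξ^3 - β * ξ) τ : ℝ)) ∧
      ∃ z₁ z₂ : ℂ, z₁.re < 0 ∧ 0 < z₂.re ∧
        ∀ z : ℂ, z^3 + (β : ℂ) * z + Complex.I * (τ : ℂ)
          = (z - Complex.I * (Function.invFun (fun ξ : ℝ => ξ^3 - β * ξ) τ : ℝ))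
            * (z - z₁) * (z - z₂) := by
  set f : ℝ → ℝ := fun ξ => ξ ^ 3 - β * ξ
  have hsurj : Function.Surjective f := surjective_cube_sub_mul β
  refine ⟨strictMono_cube_sub_mul hβ.le, ⟨(strictMono_cube_sub_mul hβ.le).injective, hsurj⟩,
    fun τ => ?_⟩
  set k : ℝ := Function.invFun f τ
  have hk : (k : ℂ) ^ 3 - β * k = τ := by exact_mod_cast Function.invFun_eq (hsurj τ)
  set s : ℝ := √(3 * k ^ 2 - 4 * β)
  have hs_pos : 0 < s := Real.sqrt_pos.mpr (by nlinarith [sq_nonneg k])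
  have hs : (s : ℂ) ^ 2 = 3 * k ^ 2 - 4 * β := by
    exact_mod_cast Real.sq_sqrt (by nlinarith [sq_nonneg k] : 0 ≤ 3 * k ^ 2 - 4 * β)
  have hfactor := fun z => cube_add_mul_add_I_mul_eq_mul β τ k s z hk hs
  have hre₁ : ((-s - I * k) / 2 : ℂ).re < 0 := by
    rw [← ofReal_neg, re_sub_I_mul_div_two]; linarith
  have hre₂ : 0 < ((s - I * k) / 2 : ℂ).re := by
    rw [re_sub_I_mul_div_two]; linarith
  refine ⟨by rw [hfactor]; ring, fun z hz hz_re => ?_, _, _, hre₁, hre₂, hfactor⟩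
  rw [hfactor] at hz
  rcases mul_eq_zero.mp hz with hz | hz
  · rcases mul_eq_zero.mp hz with hz | hz
    · exact sub_eq_zero.mp hz
    · rw [sub_eq_zero.mp hz] at hz_re; linarith
  · rw [sub_eq_zero.mp hz] at hz_re; linarith
end

section
/- Let β < 0. Then there exists a constant c > 0, depending only on β, such that for every τ ∈ ℝ the unique root r₀(τ) of z³ + βz + iτ = 0 with negative real part satisfies Re r₀(τ) ≤ -c(1+|τ|)^{1/3}. -/
/-- For `β < 0` there is `c > 0`, depending only on `β`, such that for every
`τ ∈ ℝ` the (unique) root of `z³ + βz + iτ = 0` with negative real part has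
real part at most `-c(1+|τ|)^{1/3}`. -/
theorem negative_root_decay (β : ℝ) (hβ : β < 0) :
    ∃ c > 0, ∀ τ : ℝ, ∀ r : ℂ,
      r^3 + (β : ℂ) * r + Complex.I * (τ : ℂ) = 0 → r.re < 0 →
      r.re ≤ -c * (1 + |τ|) ^ ((1:ℝ)/3) := by
  have hsβ : 0 < Real.sqrt (-β) := Real.sqrt_pos.2 (by linarith)
  have hs3 : 0 < Real.sqrt 3 := Real.sqrt_pos.2 (by norm_num)
  set M : ℝ := min (Real.sqrt (-β) ^ 3 / 2) (3 * Real.sqrt 3 / 16) with hM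
  have hMpos : 0 < M := lt_min (by positivity) (by positivity)
  have hm1 : M ≤ Real.sqrt (-β) ^ 3 / 2 := min_le_left _ _
  have hm2 : M ≤ 3 * Real.sqrt 3 / 16 := min_le_right _ _
  clear_value M
  refine ⟨M ^ ((1:ℝ)/3), Real.rpow_pos_of_pos hMpos _, ?_⟩
  intro τ r heq hre
  set x := r.re with hxdef
  set y := r.im with hydef
  -- real and imaginary parts of the equation
  have h1 : x^3 - 3*x*y^2 + β*x = 0 := by
    have h : (r^3 + (β : ℂ) * r + Complex.I * (τ : ℂ)).re
        = x^3 - 3*x*y^2 + β*x := by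
      simp [pow_succ, Complex.mul_re, Complex.mul_im]
      ring
    rw [heq] at h
    simpa using h.symm
  have h2 : 3*x^2*y - y^3 + β*y + τ = 0 := by
    have h : (r^3 + (β : ℂ) * r + Complex.I * (τ : ℂ)).im
        = 3*x^2*y - y^3 + β*y + τ := by
      simp [pow_succ, Complex.mul_re, Complex.mul_im]
      ring
    rw [heq] at h
    simpa using h.symm
  clear_value x y
  -- from h1 and x ≠ 0 : 3y² = x² + β
  have hfac : x * (x^2 - 3*y^2 + β) = 0 := by linear_combination h1
  have hy2 : 3*y^2 - x^2 - β = 0 := by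
    rcases mul_eq_zero.1 hfac with h | h
    · exact absurd h (ne_of_lt hre)
    · linarith
  have hxβ : -β ≤ x^2 := by nlinarith [sq_nonneg y]
  -- 27 τ² = (x²+β)(8x²+2β)²
  have hτsq : 27*τ^2 = (x^2+β)*(8*x^2+2*β)^2 := by
    linear_combination (27*(τ - (3*x^2*y - y^3 + β*y))) * h2 +
      (9*y^4 - (51*x^2+15*β)*y^2 + (8*x^2+2*β)^2) * hy2
  -- hence 27 τ² ≤ 64 x⁶
  have h64 : 27*τ^2 ≤ 64*x^6 := by
    nlinarith [hτsq, hxβ, hβ, sq_nonneg (8*x^2+2*β),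
      mul_nonneg (by linarith : (0:ℝ) ≤ -β) (sq_nonneg (8*x^2+2*β)),
      mul_nonneg (by linarith : (0:ℝ) ≤ x^2+β)
        (mul_nonneg (by linarith : (0:ℝ) ≤ -2*β) (by nlinarith : (0:ℝ) ≤ 16*x^2+2*β))]
  set A : ℝ := -x with hA
  clear_value A
  have hApos : 0 < A := by simp [hA]; linarith
  -- A ≥ √(-β)
  have hAs : Real.sqrt (-β) ≤ A := by
    nlinarith [Real.sq_sqrt (by linarith : (0:ℝ) ≤ -β), hxβ, hsβ, hApos]
  have hAs3 : Real.sqrt (-β) ^ 3 ≤ A^3 := by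
    exact pow_le_pow_left₀ hsβ.le hAs 3
  -- A³ ≥ (3√3/8)|τ|
  have hAt : 3 * Real.sqrt 3 / 8 * |τ| ≤ A^3 := by
    have hsq : (Real.sqrt 3)^2 = 3 := Real.sq_sqrt (by norm_num)
    have habs : |τ|^2 = τ^2 := sq_abs τ
    have hA6 : A^6 = x^6 := by rw [hA]; ring
    have h6 : 27*τ^2 ≤ 64*A^6 := by rw [hA6]; linarith
    have hBsq : (3 * Real.sqrt 3 / 8 * |τ|)^2 = 27/64 * τ^2 := by
      linear_combination (9/64*|τ|^2) * hsq + 27/64 * habs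
    have hsq2 : (3 * Real.sqrt 3 / 8 * |τ|)^2 ≤ (A^3)^2 := by
      have hAA : (A^3)^2 = A^6 := by ring
      rw [hBsq, hAA]; linarith
    exact le_of_pow_le_pow_left₀ two_ne_zero (pow_pos hApos 3).le hsq2
  -- conclude
  have hc3 : (M ^ ((1:ℝ)/3))^(3:ℕ) = M := by
    rw [← Real.rpow_natCast (M ^ ((1:ℝ)/3)) 3, ← Real.rpow_mul hMpos.le]
    norm_num
  have hP3 : ((1+|τ|) ^ ((1:ℝ)/3))^(3:ℕ) = 1+|τ| := by
    rw [← Real.rpow_natCast ((1+|τ|) ^ ((1:ℝ)/3)) 3,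
      ← Real.rpow_mul (by positivity)]
    norm_num
  have key : M ^ ((1:ℝ)/3) * (1+|τ|) ^ ((1:ℝ)/3) ≤ A := by
    apply le_of_pow_le_pow_left₀ (n := 3) (by norm_num) hApos.le
    rw [mul_pow, hc3, hP3]
    have hm3 : M * |τ| ≤ 3 * Real.sqrt 3 / 16 * |τ| :=
      mul_le_mul_of_nonneg_right hm2 (abs_nonneg τ)
    have : M * (1+|τ|) = M + M * |τ| := by ring
    rw [this]
    linarith [hm1, hm3, hAs3, hAt]
  have : -(M ^ ((1:ℝ)/3) * (1+|τ|) ^ ((1:ℝ)/3)) ≥ x := by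
    simp only [hA] at key; linarith
  linarith [this]
end

section
/- Let r₀ : ℝ → ℂ be continuous with Re r₀(τ) ≤ 0 and |r₀(τ)| ≤ C(1+|τ|)^{1/3} for all τ ∈ ℝ (for some constant C > 0), and let h : ℝ → ℂ be a Schwartz function. Define, for t ∈ ℝ and x ≥ 0, R(t,x) = (1/2π)∫_ℝ e^{itτ} e^{r₀(τ)x} ĥ(τ) dτ (the integral converges absolutely). Then for every t ∈ ℝ: R(t,0) = h(t); the map x ↦ R(t,x) is twice differentiable on [0,∞) (one-sided derivatives at x = 0), with ∂_x R(t,0) = (1/2π)∫_ℝ e^{itτ} r₀(τ) ĥ(τ) dτ and ∂_x² R(t,0) = (1/2π)∫_ℝ e^{itτ} r₀(τ)² ĥ(τ) dτ. -/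
/-!
For `x ≥ 0` and `Re r₀ ≤ 0` we have `|e^{r₀(τ) x}| ≤ 1`, and the difference quotients of
`x ↦ e^{r₀(τ) x}` on `[0, ∞)` are bounded by `|r₀(τ)| ≤ C (1 + |τ|)`. Since `ĥ(τ) = 𝓕h(τ / 2π)` is
again a Schwartz function, every `|r₀|^k |ĥ|` is integrable, so dominated convergence lets us
differentiate under the integral from the right, each derivative producing one factor `r₀(τ)`.
At `x = 0` the integral is Fourier inversion in the normalization of `ĥ`.
-/

open MeasureTheory

/-- One-dimensional Fourier transform: `ĥ(τ) = ∫ e^{-iτt} h(t) dt`. -/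
noncomputable def FT1 (h : ℝ → ℂ) (τ : ℝ) : ℂ :=
  ∫ t : ℝ, Complex.exp (-(Complex.I * τ * t)) * h t

/-- The right half-line boundary potential
`R(t,x) = (1/2π) ∫ e^{itτ} e^{r₀(τ)x} ĥ(τ) dτ`. -/
noncomputable def Rpot (r₀ : ℝ → ℂ) (h : ℝ → ℂ) (t x : ℝ) : ℂ :=
  (1 / (2 * (Real.pi : ℂ))) *
    ∫ τ : ℝ, Complex.exp (Complex.I * t * τ) * Complex.exp (r₀ τ * x) * FT1 h τ

open Complex Set Filter FourierTransform

theorem le_mul_one_add_abs_of_le_mul_rpow {u C s τ : ℝ} (hu : 0 ≤ u) (hs : s ≤ 1)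
    (h : u ≤ C * (1 + |τ|) ^ s) : u ≤ C * (1 + |τ|) := by
  have h1 : 1 ≤ 1 + |τ| := le_add_of_nonneg_right (abs_nonneg τ)
  have hC : 0 ≤ C := nonneg_of_mul_nonneg_left (hu.trans h) (by positivity)
  calc u ≤ C * (1 + |τ|) ^ s := h
    _ ≤ C * (1 + |τ|) := by
      gcongr
      exact Real.rpow_le_self_of_one_le h1 hs

theorem norm_cexp_mul_ofReal_le_one {a : ℂ} (ha : a.re ≤ 0) {x : ℝ} (hx : 0 ≤ x) :
    ‖exp (a * x)‖ ≤ 1 := by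
  rw [norm_exp, Real.exp_le_one_iff, re_mul_ofReal]
  exact mul_nonpos_of_nonpos_of_nonneg ha hx

theorem norm_cexp_mul_ofReal_sub_le {a : ℂ} (ha : a.re ≤ 0) {x y : ℝ} (hx : 0 ≤ x)
    (hy : 0 ≤ y) : ‖exp (a * y) - exp (a * x)‖ ≤ ‖a‖ * |y - x| := by
  have hderiv (s : ℝ) : HasDerivAt (fun s : ℝ => exp (a * s)) (exp (a * s) * a) s := by
    simpa using ((hasDerivAt_id (s : ℂ)).const_mul a).comp_ofReal.cexp
  have hbound (s : ℝ) (hs : s ∈ Ici (0 : ℝ)) : ‖exp (a * s) * a‖ ≤ ‖a‖ := by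
    rw [norm_mul]
    exact mul_le_of_le_one_left (norm_nonneg a) (norm_cexp_mul_ofReal_le_one ha hs)
  simpa [Real.norm_eq_abs] using (convex_Ici (0 : ℝ)).norm_image_sub_le_of_norm_hasDerivWithin_le
    (fun s _ => (hderiv s).hasDerivWithinAt) hbound hx hy

theorem norm_slope_cexp_mul_ofReal_le {a : ℂ} (ha : a.re ≤ 0) {x y : ℝ} (hx : 0 ≤ x)
    (hy : 0 ≤ y) : ‖slope (fun s : ℝ => exp (a * s)) x y‖ ≤ ‖a‖ := by
  rcases eq_or_ne y x with rfl | hyx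
  · simp
  rw [slope_def_module, norm_smul, norm_inv, Real.norm_eq_abs,
    inv_mul_le_iff₀ (abs_pos.2 (sub_ne_zero.2 hyx))]
  exact (norm_cexp_mul_ofReal_sub_le ha hx hy).trans_eq (mul_comm _ _)

section ExpIntegral

variable {α : Type*} [MeasurableSpace α] {μ : Measure α} {a F : α → ℂ}

theorem integrable_cexp_mul_ofReal_mul (ha : AEStronglyMeasurable a μ)
    (hre : ∀ τ, (a τ).re ≤ 0) (hF : Integrable F μ) {x : ℝ} (hx : 0 ≤ x) :
    Integrable (fun τ => exp (a τ * x) * F τ) μ :=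
  hF.bdd_mul (continuous_exp.comp_aestronglyMeasurable (ha.mul_const _))
    (Eventually.of_forall fun τ => norm_cexp_mul_ofReal_le_one (hre τ) hx)

noncomputable def expIntegral (μ : Measure α) (a F : α → ℂ) (x : ℝ) : ℂ :=
  ∫ τ, exp (a τ * x) * F τ ∂μ

theorem expIntegral_zero (μ : Measure α) (a F : α → ℂ) : expIntegral μ a F 0 = ∫ τ, F τ ∂μ := by
  simp [expIntegral]

theorem hasDerivWithinAt_expIntegral (ha : AEStronglyMeasurable a μ)
    (hre : ∀ τ, (a τ).re ≤ 0) (hF : Integrable F μ) (haF : Integrable (a * F) μ)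
    {x : ℝ} (hx : 0 ≤ x) :
    HasDerivWithinAt (expIntegral μ a F) (expIntegral μ a (a * F) x) (Ici 0) x := by
  set e : α → ℝ → ℂ := fun τ s => exp (a τ * s)
  have hslope (y : ℝ) (hy : 0 ≤ y) :
      slope (expIntegral μ a F) x y = ∫ τ, slope (e τ) x y * F τ ∂μ := by
    rw [slope_def_module, expIntegral, expIntegral,
      ← integral_sub (integrable_cexp_mul_ofReal_mul ha hre hF hy)
      (integrable_cexp_mul_ofReal_mul ha hre hF hx), ← integral_smul]
    congr 1 with τ
    rw [slope_def_module, smul_mul_assoc, sub_mul]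
  rw [hasDerivWithinAt_iff_tendsto_slope]
  refine Tendsto.congr' (eventually_nhdsWithin_of_forall fun y hy => (hslope y hy.1).symm) ?_
  refine tendsto_integral_filter_of_dominated_convergence (fun τ => ‖a τ * F τ‖) ?_ ?_ haF.norm ?_
  · refine Eventually.of_forall fun y => AEStronglyMeasurable.mul ?_ hF.1
    have hexp (s : ℝ) : AEStronglyMeasurable (fun τ => e τ s) μ :=
      continuous_exp.comp_aestronglyMeasurable (ha.mul_const _)
    simp only [slope_def_module]
    exact ((hexp y).sub (hexp x)).const_smul _
  · filter_upwards [self_mem_nhdsWithin] with y hy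
    refine Eventually.of_forall fun τ => ?_
    rw [norm_mul, norm_mul]
    exact mul_le_mul_of_nonneg_right (norm_slope_cexp_mul_ofReal_le (hre τ) hx hy.1) (norm_nonneg _)
  · refine Eventually.of_forall fun τ => ?_
    have hd : HasDerivAt (e τ) (e τ x * a τ) x := by
      simpa using ((hasDerivAt_id (x : ℂ)).const_mul (a τ)).comp_ofReal.cexp
    simpa only [Pi.mul_apply, mul_assoc] using
      (hasDerivWithinAt_iff_tendsto_slope.mp (hd.hasDerivWithinAt (s := Ici 0))).mul_const (F τ)

end ExpIntegral

namespace SchwartzMap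

variable {D V : Type*} [NormedAddCommGroup D] [NormedSpace ℝ D] [MeasurableSpace D] [BorelSpace D]
  [SecondCountableTopology D] {μ : Measure D} [μ.HasTemperateGrowth]
  [NormedAddCommGroup V] [NormedSpace ℝ V]

theorem integrable_one_add_norm_pow_mul (g : 𝓢(D, V)) (k : ℕ) :
    Integrable (fun x => (1 + ‖x‖) ^ k * ‖g x‖) μ := by
  refine (((g.integrable_pow_mul μ 0).add (g.integrable_pow_mul μ k)).const_mul (2 ^ (k - 1))).mono'
    (by fun_prop) (Eventually.of_forall fun x => ?_)
  rw [Real.norm_of_nonneg (by positivity), Pi.add_apply]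
  calc (1 + ‖x‖) ^ k * ‖g x‖ ≤ 2 ^ (k - 1) * (1 ^ k + ‖x‖ ^ k) * ‖g x‖ := by
        gcongr
        exact add_pow_le zero_le_one (norm_nonneg x) k
    _ = _ := by ring

theorem integrable_smul_of_norm_le {𝕜 : Type*} [NormedField 𝕜] [NormedSpace 𝕜 V]
    (g : 𝓢(D, V)) {b : D → 𝕜} (hb : AEStronglyMeasurable b μ) {K : ℝ} {k : ℕ}
    (hbk : ∀ x, ‖b x‖ ≤ K * (1 + ‖x‖) ^ k) : Integrable (fun x => b x • g x) μ := by
  refine ((g.integrable_one_add_norm_pow_mul k).const_mul K).mono'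
    (hb.smul g.continuous.aestronglyMeasurable) (Eventually.of_forall fun x => ?_)
  rw [norm_smul, ← mul_assoc]
  exact mul_le_mul_of_nonneg_right (hbk x) (norm_nonneg _)

end SchwartzMap

theorem FT1_eq_fourier (h : ℝ → ℂ) (τ : ℝ) : FT1 h τ = 𝓕 h (τ / (2 * Real.pi)) := by
  rw [Real.fourier_real_eq_integral_exp_smul, FT1]
  congr 1 with v
  rw [smul_eq_mul]
  congr 2
  push_cast
  field_simp

theorem SchwartzMap.exists_coe_eq_FT1 (h : SchwartzMap ℝ ℂ) :
    ∃ g : SchwartzMap ℝ ℂ, ⇑g = FT1 h := by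
  refine ⟨SchwartzMap.compCLMOfContinuousLinearEquiv ℂ
    (ContinuousLinearEquiv.smulLeft (Units.mk0 (2 * Real.pi)⁻¹ (by positivity))) (𝓕 h), ?_⟩
  ext τ
  rw [FT1_eq_fourier, div_eq_inv_mul]
  rfl

theorem SchwartzMap.integral_cexp_mul_FT1 (h : SchwartzMap ℝ ℂ) (t : ℝ) :
    ∫ τ : ℝ, exp (I * t * τ) * FT1 h τ = 2 * Real.pi * h t := by
  have hinv : 𝓕⁻ (𝓕 ⇑h) t = h t := by
    rw [h.continuous.fourierInv_fourier_eq h.integrable (𝓕 h).integrable]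
  have h2π : (0 : ℝ) < 2 * Real.pi := by positivity
  let φ : ℝ → ℂ := fun σ => exp (I * t * ((2 * Real.pi * σ : ℝ) : ℂ)) * 𝓕 h σ
  calc ∫ τ : ℝ, exp (I * t * τ) * FT1 h τ = ∫ τ : ℝ, φ (τ / (2 * Real.pi)) := by
        congr 1 with τ
        simp only [φ, FT1_eq_fourier]
        congr 3
        push_cast
        field_simp
    _ = (2 * Real.pi : ℝ) • 𝓕⁻ (𝓕 ⇑h) t := by
        rw [Measure.integral_comp_div, abs_of_pos h2π, Real.fourierInv_eq']
        congr 2 with σ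
        simp only [φ, smul_eq_mul, RCLike.inner_apply, conj_trivial]
        push_cast
        ring_nf
        rfl
    _ = 2 * Real.pi * h t := by rw [hinv, Complex.real_smul]; push_cast; ring

theorem SchwartzMap.integrable_pow_mul_cexp_mul_FT1 (h : SchwartzMap ℝ ℂ) {b : ℝ → ℂ}
    (hb : AEStronglyMeasurable b) {K : ℝ} (hbK : ∀ τ, ‖b τ‖ ≤ K * (1 + |τ|)) (t : ℝ) (m : ℕ) :
    Integrable (b ^ m * fun τ : ℝ => exp (I * t * τ) * FT1 h τ) := by
  obtain ⟨ĥ, hĥ⟩ := h.exists_coe_eq_FT1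
  have hunit (τ : ℝ) : ‖exp (I * t * τ)‖ = 1 := by simp [norm_exp]
  refine (ĥ.integrable_smul_of_norm_le (μ := volume) (b := fun τ => b τ ^ m * exp (I * t * τ))
    ((hb.pow m).mul (by fun_prop)) (K := K ^ m) (k := m) fun τ => ?_).congr
    (Eventually.of_forall fun τ => ?_)
  · rw [norm_mul, hunit, mul_one, norm_pow, ← mul_pow]
    exact pow_le_pow_left₀ (norm_nonneg _) (hbK τ) m
  · simp only [hĥ, smul_eq_mul, Pi.mul_apply, Pi.pow_apply, mul_assoc]

theorem Rpot_traces_general (C : ℝ) (r₀ : ℝ → ℂ) (hcont : Continuous r₀)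
    (hre : ∀ τ : ℝ, (r₀ τ).re ≤ 0)
    (hbd : ∀ τ : ℝ, ‖r₀ τ‖ ≤ C * (1 + |τ|) ^ ((1:ℝ)/3))
    (h : SchwartzMap ℝ ℂ) :
    ∀ t : ℝ,
      (∀ x : ℝ, 0 ≤ x → Integrable (fun τ : ℝ =>
        Complex.exp (Complex.I * t * τ) * Complex.exp (r₀ τ * x) * FT1 (⇑h) τ)) ∧
      Rpot r₀ (⇑h) t 0 = h t ∧
      ∃ R1 : ℝ → ℂ,
        (∀ x ∈ Set.Ici (0:ℝ),
          HasDerivWithinAt (fun y => Rpot r₀ (⇑h) t y) (R1 x) (Set.Ici 0) x) ∧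
        R1 0 = (1 / (2 * (Real.pi : ℂ))) *
          ∫ τ : ℝ, Complex.exp (Complex.I * t * τ) * r₀ τ * FT1 (⇑h) τ ∧
        ∃ R2 : ℝ → ℂ,
          (∀ x ∈ Set.Ici (0:ℝ), HasDerivWithinAt R1 (R2 x) (Set.Ici 0) x) ∧
          R2 0 = (1 / (2 * (Real.pi : ℂ))) *
            ∫ τ : ℝ, Complex.exp (Complex.I * t * τ) * (r₀ τ)^2 * FT1 (⇑h) τ := by
  intro t
  set G : ℝ → ℂ := fun τ => exp (I * t * τ) * FT1 h τ with hG
  set c : ℂ := 1 / (2 * Real.pi)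
  have hint : ∀ m : ℕ, Integrable (r₀ ^ m * G) :=
    h.integrable_pow_mul_cexp_mul_FT1 hcont.aestronglyMeasurable
      (fun τ => le_mul_one_add_abs_of_le_mul_rpow (norm_nonneg _) (by norm_num) (hbd τ)) t
  have hint0 : Integrable G := by simpa using hint 0
  have hint1 : Integrable (r₀ * G) := by simpa using hint 1
  have hint2 : Integrable (r₀ * (r₀ * G)) := by simpa only [pow_two, mul_assoc] using hint 2
  have hR : (fun y => Rpot r₀ h t y) = fun y => c * expIntegral volume r₀ G y := by
    funext y
    rw [Rpot, expIntegral]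
    congr 2 with τ
    ring
  have hderiv {F : ℝ → ℂ} (hF : Integrable F) (hrF : Integrable (r₀ * F)) (x : ℝ)
      (hx : x ∈ Ici (0 : ℝ)) :
      HasDerivWithinAt (fun y => c * expIntegral volume r₀ F y)
        (c * expIntegral volume r₀ (r₀ * F) x) (Ici 0) x :=
    (hasDerivWithinAt_expIntegral hcont.aestronglyMeasurable hre hF hrF hx).const_mul c
  refine ⟨fun x hx => ?_, ?_, fun x => c * expIntegral volume r₀ (r₀ * G) x, ?_, ?_,
    fun x => c * expIntegral volume r₀ (r₀ * (r₀ * G)) x, hderiv hint1 hint2, ?_⟩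
  · refine (integrable_cexp_mul_ofReal_mul hcont.aestronglyMeasurable hre hint0 hx).congr
      (Eventually.of_forall fun τ => ?_)
    simp only [hG]
    ring
  · rw [congrFun hR 0, expIntegral_zero, h.integral_cexp_mul_FT1]
    simp only [c]
    field_simp
  · rw [hR]
    exact hderiv hint0 hint1
  all_goals
    dsimp only
    rw [expIntegral_zero]
    congr 2 with τ
    simp only [hG, Pi.mul_apply]
    ring

/-- Trace and boundary-derivative identities for the right half-line
potential `R`. -/
theorem Rpot_traces (C : ℝ) (hC : 0 < C) (r₀ : ℝ → ℂ) (hcont : Continuous r₀)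
    (hre : ∀ τ : ℝ, (r₀ τ).re ≤ 0)
    (hbd : ∀ τ : ℝ, ‖r₀ τ‖ ≤ C * (1 + |τ|) ^ ((1:ℝ)/3))
    (h : SchwartzMap ℝ ℂ) :
    ∀ t : ℝ,
      (∀ x : ℝ, 0 ≤ x → Integrable (fun τ : ℝ =>
        Complex.exp (Complex.I * t * τ) * Complex.exp (r₀ τ * x) * FT1 (⇑h) τ)) ∧
      Rpot r₀ (⇑h) t 0 = h t ∧
      ∃ R1 : ℝ → ℂ,
        (∀ x ∈ Set.Ici (0:ℝ),
          HasDerivWithinAt (fun y => Rpot r₀ (⇑h) t y) (R1 x) (Set.Ici 0) x) ∧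
        R1 0 = (1 / (2 * (Real.pi : ℂ))) *
          ∫ τ : ℝ, Complex.exp (Complex.I * t * τ) * r₀ τ * FT1 (⇑h) τ ∧
        ∃ R2 : ℝ → ℂ,
          (∀ x ∈ Set.Ici (0:ℝ), HasDerivWithinAt R1 (R2 x) (Set.Ici 0) x) ∧
          R2 0 = (1 / (2 * (Real.pi : ℂ))) *
            ∫ τ : ℝ, Complex.exp (Complex.I * t * τ) * (r₀ τ)^2 * FT1 (⇑h) τ :=
  Rpot_traces_general C r₀ hcont hre hbd h
end

section
/- Let ε > 0 and let γ : ℝ → ℂ be a measurable function satisfying Re γ(λ) ≤ -ε|λ| for all λ ∈ ℝ. Then there is a constant c(ε) > 0, depending only on ε, such that for every f ∈ L²(ℝ) the integral ∫_ℝ e^{γ(λ)x} f(λ) dλ converges absolutely for every x > 0 and (∫_0^∞ |∫_ℝ e^{γ(λ)x} f(λ) dλ|² dx)^{1/2} ≤ c(ε) ‖f‖_{L²(ℝ)}. -/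
/-!
Pointwise, `|∫ e^{γ(λ)x} f(λ) dλ| ≤ ∫ e^{-εx|λ|} |f(λ)| dλ`, so it suffices to bound the positive
integral operator with kernel `K(x, λ) = e^{-εx|λ|}` from `L²(ℝ)` to `L²(0, ∞)`. This is a Schur
test with the weights `x^{-1/2}` and `|λ|^{-1/2}`: by `Γ(1/2) = √π`,
`∫ K(x, λ) |λ|^{-1/2} dλ = 2 √(π/ε) x^{-1/2}` and `∫₀^∞ K(x, λ) x^{-1/2} dx = √(π/ε) |λ|^{-1/2}`,
so the operator norm is at most `√(2π/ε)`. For fixed `x > 0` the integral converges absolutely by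
Cauchy–Schwarz, since `|e^{γ(λ)x}| ≤ e^{-εx|λ|}` is square integrable.
-/

open MeasureTheory Set Function Real
open scoped ENNReal

section Schur

variable {α β : Type*} [MeasurableSpace α] [MeasurableSpace β] {μ : Measure α} {ν : Measure β}

theorem ENNReal.sq_lintegral_mul_le_weighted {k q g : β → ℝ≥0∞} (hk : AEMeasurable k ν)
    (hq : AEMeasurable q ν) (hg : AEMeasurable g ν) (hq0 : ∀ᵐ y ∂ν, q y ≠ 0)
    (hqtop : ∀ᵐ y ∂ν, q y ≠ ∞) :
    (∫⁻ y, k y * g y ∂ν) ^ 2 ≤ (∫⁻ y, k y * q y ∂ν) * ∫⁻ y, k y * g y ^ 2 / q y ∂ν := by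
  set a : β → ℝ≥0∞ := fun y => (k y * q y) ^ (2⁻¹ : ℝ)
  set b : β → ℝ≥0∞ := fun y => (k y * g y ^ 2 / q y) ^ (2⁻¹ : ℝ)
  have rpow_inv_two_rpow_two : ∀ x : ℝ≥0∞, (x ^ (2⁻¹ : ℝ)) ^ (2 : ℝ) = x := fun x => by
    rw [← ENNReal.rpow_mul]; norm_num
  have rpow_inv_two_sq : ∀ x : ℝ≥0∞, (x ^ (2⁻¹ : ℝ)) ^ 2 = x := fun x => by
    rw [← ENNReal.rpow_two, rpow_inv_two_rpow_two]
  have hab : (fun y => k y * g y) =ᵐ[ν] fun y => a y * b y := by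
    filter_upwards [hq0, hqtop] with y hy0 hytop
    have : k y * q y * (k y * g y ^ 2 / q y) = (k y * g y) ^ 2 := by
      rw [div_eq_mul_inv]
      calc _ = (k y * g y) ^ 2 * (q y * (q y)⁻¹) := by ring
        _ = _ := by rw [ENNReal.mul_inv_cancel hy0 hytop, mul_one]
    simp only [a, b]
    rw [← ENNReal.mul_rpow_of_nonneg _ _ (by norm_num), this, ← ENNReal.rpow_natCast,
      ← ENNReal.rpow_mul]
    norm_num
  have holder := ENNReal.lintegral_mul_le_Lp_mul_Lq ν Real.HolderConjugate.two_two
    (by fun_prop : AEMeasurable a ν) (by fun_prop : AEMeasurable b ν)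
  simp only [a, b, Pi.mul_apply, rpow_inv_two_rpow_two, one_div] at holder
  calc (∫⁻ y, k y * g y ∂ν) ^ 2 = (∫⁻ y, a y * b y ∂ν) ^ 2 := by rw [lintegral_congr_ae hab]
    _ ≤ _ := by grw [holder]; rw [mul_pow, rpow_inv_two_sq, rpow_inv_two_sq]

theorem lintegral_sq_lintegral_mul_le_of_schur [SFinite μ] [SFinite ν] {K : α → β → ℝ≥0∞}
    (hK : Measurable (uncurry K)) {p : α → ℝ≥0∞} {q : β → ℝ≥0∞} (hp : AEMeasurable p μ)
    (hq : AEMeasurable q ν) (hq0 : ∀ᵐ y ∂ν, q y ≠ 0) (hqtop : ∀ᵐ y ∂ν, q y ≠ ∞) {A B : ℝ≥0∞}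
    (hKq : ∀ᵐ x ∂μ, ∫⁻ y, K x y * q y ∂ν ≤ A * p x)
    (hKp : ∀ᵐ y ∂ν, ∫⁻ x, K x y * p x ∂μ ≤ B * q y) {g : β → ℝ≥0∞} (hg : AEMeasurable g ν) :
    ∫⁻ x, (∫⁻ y, K x y * g y ∂ν) ^ 2 ∂μ ≤ A * B * ∫⁻ y, g y ^ 2 ∂ν := by
  have hKx : ∀ x, Measurable (K x) := fun x => hK.of_uncurry_left
  have hKy : ∀ y, Measurable (K · y) := fun y => hK.of_uncurry_right
  have hjoint : AEMeasurable (fun z : α × β => p z.1 * (K z.1 z.2 * g z.2 ^ 2 / q z.2))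
      (μ.prod ν) :=
    hp.comp_fst.mul ((hK.aemeasurable.mul (hg.comp_snd.pow_const 2)).div hq.comp_snd)
  calc ∫⁻ x, (∫⁻ y, K x y * g y ∂ν) ^ 2 ∂μ
      ≤ ∫⁻ x, A * (p x * ∫⁻ y, K x y * g y ^ 2 / q y ∂ν) ∂μ := by
        refine lintegral_mono_ae ?_
        filter_upwards [hKq] with x hx
        grw [ENNReal.sq_lintegral_mul_le_weighted (hKx x).aemeasurable hq hg hq0 hqtop, hx,
          mul_assoc]
    _ = A * ∫⁻ x, ∫⁻ y, p x * (K x y * g y ^ 2 / q y) ∂ν ∂μ := by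
        rw [← lintegral_const_mul'' _ hjoint.lintegral_prod_right']
        refine lintegral_congr fun x => ?_
        dsimp only
        rw [lintegral_const_mul'' (f := fun y => K x y * g y ^ 2 / q y) _
          (((hKx x).aemeasurable.mul (hg.pow_const 2)).div hq)]
    _ = A * ∫⁻ y, g y ^ 2 / q y * ∫⁻ x, K x y * p x ∂μ ∂ν := by
        rw [lintegral_lintegral_swap hjoint]
        refine congrArg _ (lintegral_congr fun y => ?_)
        rw [← lintegral_const_mul'' (f := fun x => K x y * p x) _ ((hKy y).aemeasurable.mul hp)]
        exact lintegral_congr fun x => by simp only [div_eq_mul_inv]; ring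
    _ ≤ A * ∫⁻ y, B * g y ^ 2 ∂ν := by
        gcongr 1
        refine lintegral_mono_ae ?_
        filter_upwards [hKp, hq0, hqtop] with y hy hy0 hytop
        rw [div_eq_mul_inv]
        calc _ ≤ g y ^ 2 * (q y)⁻¹ * (B * q y) := by gcongr
          _ = B * g y ^ 2 * (q y * (q y)⁻¹) := by ring
          _ = _ := by rw [ENNReal.mul_inv_cancel hy0 hytop, mul_one]
    _ = A * B * ∫⁻ y, g y ^ 2 ∂ν := by
        rw [lintegral_const_mul'' _ (hg.pow_const 2), mul_assoc]

end Schur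

theorem lintegral_comp_abs (f : ℝ → ℝ≥0∞) : ∫⁻ x, f |x| = 2 * ∫⁻ x in Ioi 0, f x := by
  have hIoi : ∫⁻ x in Ioi 0, f |x| = ∫⁻ x in Ioi 0, f x :=
    setLIntegral_congr_fun measurableSet_Ioi fun x hx => by rw [abs_of_pos hx]
  have hIio : ∫⁻ x in Iio 0, f |x| = ∫⁻ x in Ioi 0, f |x| := by
    have := (Measure.measurePreserving_neg (volume : Measure ℝ)).setLIntegral_comp_preimage_emb
      (Homeomorph.neg ℝ).measurableEmbedding (fun x => f |x|) (Ioi 0)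
    simpa using this
  rw [← lintegral_add_compl _ (measurableSet_Iio (a := (0 : ℝ))), compl_Iio,
    Measure.restrict_congr_set Ioi_ae_eq_Ici.symm, hIio, hIoi, two_mul]

theorem lintegral_Ioi_exp_neg_mul_mul_rpow_neg_half {b : ℝ} (hb : 0 < b) :
    ∫⁻ t in Ioi 0, ENNReal.ofReal (exp (-(b * t))) * ENNReal.ofReal (t ^ (-(1 / 2) : ℝ)) =
      ENNReal.ofReal √(π / b) := by
  have hint : IntegrableOn (fun t : ℝ => t ^ ((1 / 2 : ℝ) - 1) * exp (-(b * t))) (Ioi 0) := by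
    convert integrableOn_rpow_mul_exp_neg_mul_rpow (p := 1) (s := 1 / 2 - 1) (by norm_num)
      one_pos hb using 3
    simp
  have hval := integral_rpow_mul_exp_neg_mul_Ioi (a := 1 / 2) one_half_pos hb
  rw [Gamma_one_half_eq, ← sqrt_eq_rpow, ← sqrt_mul' _ pi_pos.le, one_div_mul_eq_div] at hval
  rw [← hval, ofReal_integral_eq_lintegral_ofReal hint
    (ae_restrict_of_forall_mem measurableSet_Ioi fun t ht =>
      mul_nonneg (rpow_nonneg (le_of_lt ht) _) (exp_pos _).le)]
  refine setLIntegral_congr_fun measurableSet_Ioi fun t _ => ?_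
  rw [← ENNReal.ofReal_mul (exp_pos _).le, mul_comm]
  norm_num

theorem sqrt_div_mul_eq_mul_rpow_neg_half (a b : ℝ) {x : ℝ} (hx : 0 ≤ x) :
    √(a / (b * x)) = √(a / b) * x ^ (-(1 / 2) : ℝ) := by
  rw [← div_div, sqrt_div' _ hx, sqrt_eq_rpow x, rpow_neg hx, div_eq_mul_inv]

theorem integrable_exp_neg_mul_abs {b : ℝ} (hb : 0 < b) :
    Integrable fun l : ℝ => exp (-(b * |l|)) := by
  refine ⟨by fun_prop, ?_⟩
  have hIoi := (exp_neg_integrableOn_Ioi 0 hb).hasFiniteIntegral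
  simp only [HasFiniteIntegral, Real.enorm_of_nonneg (exp_pos _).le, neg_mul] at hIoi ⊢
  rw [lintegral_comp_abs fun t => ENNReal.ofReal (exp (-(b * t)))]
  exact ENNReal.mul_lt_top ENNReal.ofNat_lt_top hIoi

section ExpKernel

variable {ε : ℝ}

theorem lintegral_exp_neg_mul_abs_mul_rpow_neg_half (hε : 0 < ε) {x : ℝ} (hx : 0 < x) :
    ∫⁻ l, ENNReal.ofReal (exp (-(ε * x * |l|))) * ENNReal.ofReal (|l| ^ (-(1 / 2) : ℝ)) =
      ENNReal.ofReal (2 * √(π / ε)) * ENNReal.ofReal (x ^ (-(1 / 2) : ℝ)) := by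
  rw [lintegral_comp_abs fun t => ENNReal.ofReal (exp (-(ε * x * t))) *
      ENNReal.ofReal (t ^ (-(1 / 2) : ℝ)),
    lintegral_Ioi_exp_neg_mul_mul_rpow_neg_half (mul_pos hε hx),
    sqrt_div_mul_eq_mul_rpow_neg_half _ _ hx.le, ENNReal.ofReal_mul (by positivity),
    ENNReal.ofReal_mul (by positivity), mul_assoc]
  norm_num

theorem setLIntegral_Ioi_exp_neg_mul_abs_mul_rpow_neg_half (hε : 0 < ε) {l : ℝ} (hl : l ≠ 0) :
    ∫⁻ x in Ioi 0, ENNReal.ofReal (exp (-(ε * x * |l|))) * ENNReal.ofReal (x ^ (-(1 / 2) : ℝ)) =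
      ENNReal.ofReal √(π / ε) * ENNReal.ofReal (|l| ^ (-(1 / 2) : ℝ)) := by
  have := lintegral_Ioi_exp_neg_mul_mul_rpow_neg_half (mul_pos hε (abs_pos.2 hl))
  rw [sqrt_div_mul_eq_mul_rpow_neg_half _ _ (abs_nonneg l),
    ENNReal.ofReal_mul (sqrt_nonneg _)] at this
  rw [← this]
  refine setLIntegral_congr_fun measurableSet_Ioi fun x _ => ?_
  ring_nf

theorem norm_cexp_mul_ofReal_le {z : ℂ} {l x : ℝ} (hz : z.re ≤ -ε * |l|) (hx : 0 ≤ x) :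
    ‖Complex.exp (z * x)‖ ≤ exp (-(ε * x * |l|)) := by
  rw [Complex.norm_exp, Complex.re_mul_ofReal, exp_le_exp]
  nlinarith [mul_le_mul_of_nonneg_right hz hx]

theorem integrable_cexp_mul_mul_of_re_le (hε : 0 < ε) {γ : ℝ → ℂ} (hγ : Measurable γ)
    (hγre : ∀ l, (γ l).re ≤ -ε * |l|) {f : ℝ → ℂ} (hf : MemLp f 2) {x : ℝ} (hx : 0 < x) :
    Integrable fun l => Complex.exp (γ l * x) * f l := by
  have hdom : MemLp (fun l : ℝ => exp (-(ε * x * |l|))) 2 := by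
    rw [memLp_two_iff_integrable_sq (by fun_prop)]
    convert integrable_exp_neg_mul_abs (by positivity : 0 < 2 * ε * x) using 2 with l
    rw [sq, ← exp_add]
    ring_nf
  have hexp : MemLp (fun l => Complex.exp (γ l * x)) 2 :=
    hdom.of_le (by fun_prop) (ae_of_all _ fun l => by
      rw [norm_of_nonneg (exp_pos _).le]
      exact norm_cexp_mul_ofReal_le (hγre l) hx.le)
  exact hexp.integrable_mul hf

theorem lintegral_sq_lintegral_exp_neg_mul_abs_mul_le (hε : 0 < ε) {g : ℝ → ℝ≥0∞}
    (hg : AEMeasurable g) :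
    ∫⁻ x in Ioi 0, (∫⁻ l, ENNReal.ofReal (exp (-(ε * x * |l|))) * g l) ^ 2 ≤
      ENNReal.ofReal (2 * π / ε) * ∫⁻ l, g l ^ 2 := by
  calc _ ≤ _ := lintegral_sq_lintegral_mul_le_of_schur (μ := volume.restrict (Ioi 0))
        (p := fun x => ENNReal.ofReal (x ^ (-(1 / 2) : ℝ)))
        (q := fun l => ENNReal.ofReal (|l| ^ (-(1 / 2) : ℝ))) (by fun_prop) (by fun_prop)
        (by fun_prop) ((Measure.ae_ne volume 0).mono fun l hl => by positivity)
        (ae_of_all _ fun _ => ENNReal.ofReal_ne_top)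
        (ae_restrict_of_forall_mem measurableSet_Ioi fun x hx =>
          (lintegral_exp_neg_mul_abs_mul_rpow_neg_half hε hx).le)
        ((Measure.ae_ne volume 0).mono fun l hl =>
          (setLIntegral_Ioi_exp_neg_mul_abs_mul_rpow_neg_half hε hl).le) hg
    _ = _ := by
      rw [← ENNReal.ofReal_mul (by positivity), mul_assoc, mul_self_sqrt (by positivity),
        mul_div_assoc]

end ExpKernel

theorem lintegral_enorm_sq_eq_eLpNorm_sq {α E : Type*} [MeasurableSpace α] {μ : Measure α}
    [NormedAddCommGroup E] (f : α → E) : ∫⁻ x, ‖f x‖ₑ ^ 2 ∂μ = eLpNorm f 2 μ ^ 2 := by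
  simpa using (eLpNorm_nnreal_pow_eq_lintegral (f := f) (μ := μ) (p := 2) two_ne_zero).symm

theorem sqrt_integral_norm_sq_le_of_lintegral_le {α E : Type*} [MeasurableSpace α]
    {μ : Measure α} [NormedAddCommGroup E] {F : α → E} {c : ℝ} (hc : 0 ≤ c) {S : ℝ≥0∞}
    (hS : S ≠ ∞) (h : ∫⁻ x, ‖F x‖ₑ ^ 2 ∂μ ≤ ENNReal.ofReal (c ^ 2) * S ^ 2) :
    √(∫ x, ‖F x‖ ^ 2 ∂μ) ≤ c * S.toReal := by
  rw [sqrt_le_iff]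
  refine ⟨by positivity, ?_⟩
  calc ∫ x, ‖F x‖ ^ 2 ∂μ ≤ (∫⁻ x, ‖F x‖ₑ ^ 2 ∂μ).toReal := by
        refine (le_norm_self _).trans ((norm_integral_le_lintegral_norm _).trans_eq ?_)
        simp [ofReal_norm, ENNReal.ofReal_pow]
    _ ≤ (ENNReal.ofReal (c ^ 2) * S ^ 2).toReal := by
        gcongr
        exact ENNReal.mul_ne_top ENNReal.ofReal_ne_top (ENNReal.pow_ne_top hS)
    _ = (c * S.toReal) ^ 2 := by
        rw [ENNReal.toReal_mul, ENNReal.toReal_ofReal (sq_nonneg c), ENNReal.toReal_pow, mul_pow]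

/-- Bona-type L² estimate: if `Re γ(λ) ≤ -ε|λ|` then
`x ↦ ∫ e^{γ(λ)x} f(λ) dλ` is in `L²(0,∞)` with norm controlled by
`c(ε)‖f‖_{L²(ℝ)}`. -/
theorem exp_decay_L2_estimate (ε : ℝ) (hε : 0 < ε) :
    ∃ c > 0, ∀ γ : ℝ → ℂ, Measurable γ → (∀ l : ℝ, (γ l).re ≤ -ε * |l|) →
      ∀ f : ℝ → ℂ, MemLp f 2 (volume : Measure ℝ) →
        (∀ x : ℝ, 0 < x → Integrable (fun l : ℝ => Complex.exp (γ l * x) * f l)) ∧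
        Real.sqrt (∫ x in Set.Ioi (0:ℝ),
            ‖∫ l : ℝ, Complex.exp (γ l * x) * f l‖ ^ 2)
          ≤ c * (eLpNorm f 2 (volume : Measure ℝ)).toReal := by
  refine ⟨√(2 * π / ε), by positivity, fun γ hγ hγre f hf =>
    ⟨fun x hx => integrable_cexp_mul_mul_of_re_le hε hγ hγre hf hx, ?_⟩⟩
  have hpointwise : ∀ x ∈ Ioi (0 : ℝ), ‖∫ l, Complex.exp (γ l * x) * f l‖ₑ ^ 2 ≤
      (∫⁻ l, ENNReal.ofReal (exp (-(ε * x * |l|))) * ‖f l‖ₑ) ^ 2 := fun x hx => by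
    grw [enorm_integral_le_lintegral_enorm]
    gcongr with l
    rw [enorm_mul, ← ofReal_norm]
    gcongr
    exact norm_cexp_mul_ofReal_le (hγre l) hx.le
  refine sqrt_integral_norm_sq_le_of_lintegral_le (by positivity) hf.2.ne ?_
  calc _ ≤ _ := setLIntegral_mono' measurableSet_Ioi hpointwise
    _ ≤ _ := lintegral_sq_lintegral_exp_neg_mul_abs_mul_le hε hf.1.enorm
    _ = _ := by rw [lintegral_enorm_sq_eq_eLpNorm_sq, sq_sqrt (by positivity)]
end

section
/- Let c₀, C₀ > 0. There exist constants c, C > 0, depending only on c₀ and C₀, with the following property. Let τ ∈ ℝ with |τ| > 2, and let p, q, k ∈ ℝ satisfy k = -2q, p ≥ c₀(1+|τ|)^{1/3}, |q| ≥ c₀(1+|τ|)^{1/3}, and max(p, |q|, |k|) ≤ C₀(1+|τ|)^{1/3}. Set r₀ = -p+iq, r₁ = p+iq, r₂ = ik and define n₁ = 2r₀² - 2r₀r₁ - 2r₀ - 2r₀r₂ + 2r₁ + 2r₁r₂ + 2r₂ + 1, n₂ = 1 - 2r₀² - 2r₁r₂, a₁₁ = -4r₀²r₁ - 4r₀²r₂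 - 4r₀²r₁r₂ - 2r₀² + 2r₁ - 4r₁r₂² - 4r₁²r₂² - 4r₁²r₂ + 2r₂ + 1, a₂₁ = -2r₀³ - 2r₀²r₁ - 2r₀²r₂ + 2r₀r₁r₂ - r₀ + r₁ - 2r₁r₂² - 2r₁² + 2r₂ - 2r₁r₂ + 1, a₃₁ = r₀(1 - 2r₀ - 2r₁r₂), a₁₂ = a₂₂ = 2(r₁+r₂+1), a₃₂ = 1 - 2r₀² - 2r₁r₂, a₁₃ = a₂₃ = 2, a₃₃ = 2(r₀-1). Then: |n₁| ≥ c(1+|τ|)^{2/3} and |n₂| ≥ c(1+|τ|)^{2/3}; |a₁₁| ≤ C(1+|τ|)^{4/3}; |a₂₁| + |a₃₁| ≤ C(1+|τ|); |a₁₂| + |a₂₂| + |a₃₃| ≤ C(1+|τ|)^{1/3}; |a₃₂| ≤ C(1+|τ|)^{2/3}; |a₁₃| + |a₂₃| ≤ C. -/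
/-!
With `t = (1 + |τ|)^(1/3)` the hypotheses say that `p`, `q`, `k` are all of size `t`, so the
roots `r₀, r₁, r₂` have modulus `O(t)` and every entry, being a polynomial of degree `d` in the
roots, is `O(t^d)` by the triangle inequality. The two lower bounds come from one explicit
coordinate each: `Re n₁ = (2p + 1)²` and, when `k = -2q`, `Im n₂ = 8pq`.
-/

open Complex

theorem mul_pow_le_mul_pow_mul_pow {a b M t : ℝ} {d n : ℕ} (ha : 0 ≤ a) (hab : a ≤ b)
    (hM : 1 ≤ M) (ht : 0 ≤ t) (hdn : d ≤ n) : a * (M * t)^d ≤ b * M^n * t^d := by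
  rw [mul_pow, ← mul_assoc]
  gcongr
  exact ha.trans hab

theorem exists_one_le_eq_pow_three {x : ℝ} (hx : 1 ≤ x) : ∃ t : ℝ, 1 ≤ t ∧ x = t^3 := by
  refine ⟨x^((1:ℝ)/3), Real.one_le_rpow hx (by norm_num), ?_⟩
  rw [← Real.rpow_natCast, ← Real.rpow_mul (by linarith)]
  norm_num

theorem pow_three_rpow_div_three {t : ℝ} (ht : 0 ≤ t) (a : ℝ) : (t^3)^(a/3) = t^a := by
  rw [← Real.rpow_natCast, ← Real.rpow_mul ht]
  congr 1
  ring

namespace KdVStarGraph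

section Entries

variable (r₀ r₁ r₂ : ℂ)

/- Only the distinct entries are named: `a₂₂ = a₁₂`, `a₃₂ = n₂` and `a₁₃ = a₂₃ = 2`. -/

def n₁ : ℂ := 2*r₀^2 - 2*r₀*r₁ - 2*r₀ - 2*r₀*r₂ + 2*r₁ + 2*r₁*r₂ + 2*r₂ + 1

def n₂ : ℂ := 1 - 2*r₀^2 - 2*r₁*r₂

def a₁₁ : ℂ := -4*r₀^2*r₁ - 4*r₀^2*r₂ - 4*r₀^2*r₁*r₂ - 2*r₀^2 + 2*r₁
  - 4*r₁*r₂^2 - 4*r₁^2*r₂^2 - 4*r₁^2*r₂ + 2*r₂ + 1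

def a₂₁ : ℂ := -2*r₀^3 - 2*r₀^2*r₁ - 2*r₀^2*r₂ + 2*r₀*r₁*r₂ - r₀ + r₁
  - 2*r₁*r₂^2 - 2*r₁^2 + 2*r₂ - 2*r₁*r₂ + 1

def a₃₁ : ℂ := r₀ * (1 - 2*r₀ - 2*r₁*r₂)

def a₁₂ : ℂ := 2*(r₁ + r₂ + 1)

def a₃₃ : ℂ := 2*(r₀ - 1)

end Entries

section PolynomialBounds

variable {r₀ r₁ r₂ : ℂ} {R : ℝ}

theorem norm_a₁₁_le (h₀ : ‖r₀‖ ≤ R) (h₁ : ‖r₁‖ ≤ R) (h₂ : ‖r₂‖ ≤ R) (hR : 1 ≤ R) :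
    ‖a₁₁ r₀ r₁ r₂‖ ≤ 31 * R^4 := by
  calc ‖a₁₁ r₀ r₁ r₂‖ ≤ 4*R^2*R + 4*R^2*R + 4*R^2*R*R + 2*R^2 + 2*R + 4*R*R^2
        + 4*R^2*R^2 + 4*R^2*R + 2*R + 1 := by
        repeat first | refine norm_add_le_of_le ?_ ?_ | refine norm_sub_le_of_le ?_ ?_
        all_goals
          try simp only [norm_mul, norm_pow, norm_neg, norm_ofNat, norm_one]
          bound
    _ ≤ 31 * R^4 := by
        nlinarith [pow_le_pow_right₀ hR (show 3 ≤ 4 by norm_num),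
          pow_le_pow_right₀ hR (show 2 ≤ 4 by norm_num),
          pow_le_pow_right₀ hR (show 1 ≤ 4 by norm_num), one_le_pow₀ (n := 4) hR]

theorem norm_a₂₁_le (h₀ : ‖r₀‖ ≤ R) (h₁ : ‖r₁‖ ≤ R) (h₂ : ‖r₂‖ ≤ R) (hR : 1 ≤ R) :
    ‖a₂₁ r₀ r₁ r₂‖ ≤ 19 * R^3 := by
  calc ‖a₂₁ r₀ r₁ r₂‖ ≤ 2*R^3 + 2*R^2*R + 2*R^2*R + 2*R*R*R + R + R + 2*R*R^2
        + 2*R^2 + 2*R + 2*R*R + 1 := by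
        repeat first | refine norm_add_le_of_le ?_ ?_ | refine norm_sub_le_of_le ?_ ?_
        all_goals
          try simp only [norm_mul, norm_pow, norm_neg, norm_ofNat, norm_one]
          bound
    _ ≤ 19 * R^3 := by
        nlinarith [pow_le_pow_right₀ hR (show 2 ≤ 3 by norm_num),
          pow_le_pow_right₀ hR (show 1 ≤ 3 by norm_num), one_le_pow₀ (n := 3) hR]

theorem norm_a₃₁_le (h₀ : ‖r₀‖ ≤ R) (h₁ : ‖r₁‖ ≤ R) (h₂ : ‖r₂‖ ≤ R) (hR : 1 ≤ R) :
    ‖a₃₁ r₀ r₁ r₂‖ ≤ 5 * R^3 := by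
  calc ‖a₃₁ r₀ r₁ r₂‖ ≤ R * (1 + 2*R + 2*R*R) := by
        refine norm_mul_le_of_le h₀ ?_
        repeat first | refine norm_add_le_of_le ?_ ?_ | refine norm_sub_le_of_le ?_ ?_
        all_goals
          try simp only [norm_mul, norm_ofNat, norm_one]
          bound
    _ ≤ 5 * R^3 := by
        nlinarith [pow_le_pow_right₀ hR (show 2 ≤ 3 by norm_num),
          pow_le_pow_right₀ hR (show 1 ≤ 3 by norm_num)]

theorem norm_n₂_le (h₀ : ‖r₀‖ ≤ R) (h₁ : ‖r₁‖ ≤ R) (h₂ : ‖r₂‖ ≤ R) (hR : 1 ≤ R) :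
    ‖n₂ r₀ r₁ r₂‖ ≤ 5 * R^2 := by
  calc ‖n₂ r₀ r₁ r₂‖ ≤ 1 + 2*R^2 + 2*R*R := by
        repeat first | refine norm_add_le_of_le ?_ ?_ | refine norm_sub_le_of_le ?_ ?_
        all_goals
          try simp only [norm_mul, norm_pow, norm_ofNat, norm_one]
          bound
    _ ≤ 5 * R^2 := by nlinarith

theorem norm_a₁₂_le (h₁ : ‖r₁‖ ≤ R) (h₂ : ‖r₂‖ ≤ R) (hR : 1 ≤ R) : ‖a₁₂ r₁ r₂‖ ≤ 6 * R :=
  calc ‖a₁₂ r₁ r₂‖ ≤ 2 * (R + R + 1) :=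
        norm_mul_le_of_le (by norm_num) (norm_add_le_of_le (norm_add_le_of_le h₁ h₂) (by norm_num))
    _ ≤ 6 * R := by linarith

theorem norm_a₃₃_le (h₀ : ‖r₀‖ ≤ R) (hR : 1 ≤ R) : ‖a₃₃ r₀‖ ≤ 4 * R :=
  calc ‖a₃₃ r₀‖ ≤ 2 * (R + 1) :=
        norm_mul_le_of_le (by norm_num) (norm_sub_le_of_le h₀ (by norm_num))
    _ ≤ 4 * R := by linarith

end PolynomialBounds

theorem n₁_re (p q k : ℝ) :
    (n₁ (-(p:ℂ) + q * I) (p + q * I) (k * I)).re = (2 * p + 1)^2 := by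
  simp [n₁, pow_two]; ring

theorem n₂_im (p q k : ℝ) :
    (n₂ (-(p:ℂ) + q * I) (p + q * I) (k * I)).im = 2 * p * (2 * q - k) := by
  simp [n₂, pow_two]; ring

theorem four_mul_sq_le_norm_n₁ {s p : ℝ} (q k : ℝ) (hs : 0 ≤ s) (hp : s ≤ p) :
    4 * s^2 ≤ ‖n₁ (-(p:ℂ) + q * I) (p + q * I) (k * I)‖ := by
  have := abs_re_le_norm (n₁ (-(p:ℂ) + q * I) (p + q * I) (k * I))
  rw [n₁_re, abs_sq] at this
  nlinarith

theorem eight_mul_sq_le_norm_n₂ {s p q : ℝ} (hs : 0 ≤ s) (hp : s ≤ p) (hq : s ≤ |q|) :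
    8 * s^2 ≤ ‖n₂ (-(p:ℂ) + q * I) (p + q * I) ((-2 * q : ℝ) * I)‖ := by
  have := abs_im_le_norm (n₂ (-(p:ℂ) + q * I) (p + q * I) ((-2 * q : ℝ) * I))
  rw [n₂_im, show 2 * p * (2 * q - -2 * q) = 8 * p * q by ring, abs_mul, abs_mul,
    abs_of_pos (by norm_num : (0:ℝ) < 8), abs_of_nonneg (hs.trans hp)] at this
  nlinarith [mul_le_mul hp hq hs (hs.trans hp)]

theorem norm_roots_le {p q B : ℝ} (hp : |p| ≤ B) (hq : |q| ≤ B) :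
    ‖-(p:ℂ) + q * I‖ ≤ 2 * B ∧ ‖(p:ℂ) + q * I‖ ≤ 2 * B ∧ ‖((-2 * q : ℝ) : ℂ) * I‖ ≤ 2 * B := by
  refine ⟨(norm_le_abs_re_add_abs_im _).trans ?_, (norm_le_abs_re_add_abs_im _).trans ?_, ?_⟩ <;>
    simp <;> linarith

theorem entry_estimates {r₀ r₁ r₂ : ℂ} {M t : ℝ} (hM : 1 ≤ M) (ht : 1 ≤ t)
    (h₀ : ‖r₀‖ ≤ M * t) (h₁ : ‖r₁‖ ≤ M * t) (h₂ : ‖r₂‖ ≤ M * t) :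
    ‖a₁₁ r₀ r₁ r₂‖ ≤ 31 * M^4 * t^4 ∧
    ‖a₂₁ r₀ r₁ r₂‖ + ‖a₃₁ r₀ r₁ r₂‖ ≤ 31 * M^4 * t^3 ∧
    ‖a₁₂ r₁ r₂‖ + ‖a₁₂ r₁ r₂‖ + ‖a₃₃ r₀‖ ≤ 31 * M^4 * t ∧
    ‖n₂ r₀ r₁ r₂‖ ≤ 31 * M^4 * t^2 ∧
    ‖(2:ℂ)‖ + ‖(2:ℂ)‖ ≤ 31 * M^4 := by
  have hR : 1 ≤ M * t := one_le_mul_of_one_le_of_one_le hM ht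
  have ht₀ : 0 ≤ t := by linarith
  refine ⟨?_, ?_, ?_, ?_, ?_⟩
  · exact (norm_a₁₁_le h₀ h₁ h₂ hR).trans
      (mul_pow_le_mul_pow_mul_pow (by norm_num) le_rfl hM ht₀ le_rfl)
  · calc ‖a₂₁ r₀ r₁ r₂‖ + ‖a₃₁ r₀ r₁ r₂‖ ≤ 24 * (M * t)^3 := by
          linarith [norm_a₂₁_le h₀ h₁ h₂ hR, norm_a₃₁_le h₀ h₁ h₂ hR]
      _ ≤ 31 * M^4 * t^3 :=
          mul_pow_le_mul_pow_mul_pow (by norm_num) (by norm_num) hM ht₀ (by norm_num)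
  · calc ‖a₁₂ r₁ r₂‖ + ‖a₁₂ r₁ r₂‖ + ‖a₃₃ r₀‖ ≤ 16 * (M * t)^1 := by
          linarith [norm_a₁₂_le h₁ h₂ hR, norm_a₃₃_le h₀ hR]
      _ ≤ 31 * M^4 * t := by
          simpa using mul_pow_le_mul_pow_mul_pow (a := 16) (b := 31) (d := 1) (n := 4)
            (by norm_num) (by norm_num) hM ht₀ (by norm_num)
  · exact (norm_n₂_le h₀ h₁ h₂ hR).trans
      (mul_pow_le_mul_pow_mul_pow (by norm_num) (by norm_num) hM ht₀ (by norm_num))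
  · have := one_le_pow₀ (n := 4) hM
    norm_num
    linarith

end KdVStarGraph

open KdVStarGraph

theorem boundary_matrix_estimates_general (c₀ C₀ : ℝ) (hc₀ : 0 < c₀) :
    ∃ c > 0, ∃ C > 0, ∀ τ p q k : ℝ,
      2 < |τ| → k = -2 * q →
      c₀ * (1 + |τ|) ^ ((1:ℝ)/3) ≤ p →
      c₀ * (1 + |τ|) ^ ((1:ℝ)/3) ≤ |q| →
      max p (max |q| |k|) ≤ C₀ * (1 + |τ|) ^ ((1:ℝ)/3) →
      (let r₀ : ℂ := -(p : ℂ) + (q : ℂ) * Complex.I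
       let r₁ : ℂ := (p : ℂ) + (q : ℂ) * Complex.I
       let r₂ : ℂ := (k : ℂ) * Complex.I
       let n₁ : ℂ := 2*r₀^2 - 2*r₀*r₁ - 2*r₀ - 2*r₀*r₂ + 2*r₁ + 2*r₁*r₂ + 2*r₂ + 1
       let n₂ : ℂ := 1 - 2*r₀^2 - 2*r₁*r₂
       let a₁₁ : ℂ := -4*r₀^2*r₁ - 4*r₀^2*r₂ - 4*r₀^2*r₁*r₂ - 2*r₀^2 + 2*r₁
         - 4*r₁*r₂^2 - 4*r₁^2*r₂^2 - 4*r₁^2*r₂ + 2*r₂ + 1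
       let a₂₁ : ℂ := -2*r₀^3 - 2*r₀^2*r₁ - 2*r₀^2*r₂ + 2*r₀*r₁*r₂ - r₀ + r₁
         - 2*r₁*r₂^2 - 2*r₁^2 + 2*r₂ - 2*r₁*r₂ + 1
       let a₃₁ : ℂ := r₀ * (1 - 2*r₀ - 2*r₁*r₂)
       let a₁₂ : ℂ := 2*(r₁ + r₂ + 1)
       let a₂₂ : ℂ := 2*(r₁ + r₂ + 1)
       let a₃₂ : ℂ := 1 - 2*r₀^2 - 2*r₁*r₂
       let a₁₃ : ℂ := 2
       let a₂₃ : ℂ := 2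
       let a₃₃ : ℂ := 2*(r₀ - 1)
       c * (1 + |τ|) ^ ((2:ℝ)/3) ≤ ‖n₁‖ ∧
       c * (1 + |τ|) ^ ((2:ℝ)/3) ≤ ‖n₂‖ ∧
       ‖a₁₁‖ ≤ C * (1 + |τ|) ^ ((4:ℝ)/3) ∧
       ‖a₂₁‖ + ‖a₃₁‖ ≤ C * (1 + |τ|) ∧
       ‖a₁₂‖ + ‖a₂₂‖ + ‖a₃₃‖ ≤ C * (1 + |τ|) ^ ((1:ℝ)/3) ∧
       ‖a₃₂‖ ≤ C * (1 + |τ|) ^ ((2:ℝ)/3) ∧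
       ‖a₁₃‖ + ‖a₂₃‖ ≤ C) := by
  refine ⟨4 * c₀^2, by positivity, 31 * (2 * max C₀ 1)^4, by positivity, ?_⟩
  intro τ p q k _ hk hp hq hmax
  subst hk
  obtain ⟨t, ht, hτ⟩ := exists_one_le_eq_pow_three (by linarith [abs_nonneg τ] : 1 ≤ 1 + |τ|)
  rw [hτ] at hp hq hmax ⊢
  simp only [pow_three_rpow_div_three (by linarith : (0:ℝ) ≤ t), Real.rpow_one,
    Real.rpow_ofNat, max_le_iff] at hp hq hmax ⊢
  have hct : 0 ≤ c₀ * t := by positivity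
  have hK : C₀ * t ≤ max C₀ 1 * t := by gcongr; exact le_max_left _ _
  obtain ⟨hpC, hqC, -⟩ := hmax
  obtain ⟨h₀, h₁, h₂⟩ := norm_roots_le ((abs_of_nonneg (hct.trans hp)).trans_le (hpC.trans hK))
    (hqC.trans hK)
  rw [← mul_assoc] at h₀ h₁ h₂
  obtain ⟨h₁₁, h₂₁, h₁₂, h₃₂, h₁₃⟩ :=
    entry_estimates (by linarith [le_max_right C₀ 1]) ht h₀ h₁ h₂
  refine ⟨?_, ?_, h₁₁, h₂₁, h₁₂, h₃₂, h₁₃⟩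
  · calc 4 * c₀^2 * t^2 = 4 * (c₀ * t)^2 := by ring
      _ ≤ _ := four_mul_sq_le_norm_n₁ q (-2 * q) hct hp
  · calc 4 * c₀^2 * t^2 ≤ 8 * (c₀ * t)^2 := by nlinarith [sq_nonneg (c₀ * t)]
      _ ≤ _ := eight_mul_sq_le_norm_n₂ hct hp hq

/-- High-frequency estimates for the entries and minors of the boundary-data
matrix (vertex parameter `Z = 1`) of the KdV equation on a balanced star
graph (Lemma 5.1). -/
theorem boundary_matrix_estimates (c₀ C₀ : ℝ) (hc₀ : 0 < c₀) (hC₀ : 0 < C₀) :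
    ∃ c > 0, ∃ C > 0, ∀ τ p q k : ℝ,
      2 < |τ| → k = -2 * q →
      c₀ * (1 + |τ|) ^ ((1:ℝ)/3) ≤ p →
      c₀ * (1 + |τ|) ^ ((1:ℝ)/3) ≤ |q| →
      max p (max |q| |k|) ≤ C₀ * (1 + |τ|) ^ ((1:ℝ)/3) →
      (let r₀ : ℂ := -(p : ℂ) + (q : ℂ) * Complex.I
       let r₁ : ℂ := (p : ℂ) + (q : ℂ) * Complex.I
       let r₂ : ℂ := (k : ℂ) * Complex.I
       let n₁ : ℂ := 2*r₀^2 - 2*r₀*r₁ - 2*r₀ - 2*r₀*r₂ + 2*r₁ + 2*r₁*r₂ + 2*r₂ + 1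
       let n₂ : ℂ := 1 - 2*r₀^2 - 2*r₁*r₂
       let a₁₁ : ℂ := -4*r₀^2*r₁ - 4*r₀^2*r₂ - 4*r₀^2*r₁*r₂ - 2*r₀^2 + 2*r₁
         - 4*r₁*r₂^2 - 4*r₁^2*r₂^2 - 4*r₁^2*r₂ + 2*r₂ + 1
       let a₂₁ : ℂ := -2*r₀^3 - 2*r₀^2*r₁ - 2*r₀^2*r₂ + 2*r₀*r₁*r₂ - r₀ + r₁
         - 2*r₁*r₂^2 - 2*r₁^2 + 2*r₂ - 2*r₁*r₂ + 1
       let a₃₁ : ℂ := r₀ * (1 - 2*r₀ - 2*r₁*r₂)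
       let a₁₂ : ℂ := 2*(r₁ + r₂ + 1)
       let a₂₂ : ℂ := 2*(r₁ + r₂ + 1)
       let a₃₂ : ℂ := 1 - 2*r₀^2 - 2*r₁*r₂
       let a₁₃ : ℂ := 2
       let a₂₃ : ℂ := 2
       let a₃₃ : ℂ := 2*(r₀ - 1)
       c * (1 + |τ|) ^ ((2:ℝ)/3) ≤ ‖n₁‖ ∧
       c * (1 + |τ|) ^ ((2:ℝ)/3) ≤ ‖n₂‖ ∧
       ‖a₁₁‖ ≤ C * (1 + |τ|) ^ ((4:ℝ)/3) ∧
       ‖a₂₁‖ + ‖a₃₁‖ ≤ C * (1 + |τ|) ∧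
       ‖a₁₂‖ + ‖a₂₂‖ + ‖a₃₃‖ ≤ C * (1 + |τ|) ^ ((1:ℝ)/3) ∧
       ‖a₃₂‖ ≤ C * (1 + |τ|) ^ ((2:ℝ)/3) ∧
       ‖a₁₃‖ + ‖a₂₃‖ ≤ C) :=
  boundary_matrix_estimates_general c₀ C₀ hc₀
end

section
/- Let Y be a real Banach space, Ω ⊆ Y an open set containing 0, and T : Ω → Y a map with T(0) = 0. Suppose there are p > 1, constants M, δ > 0 with ‖T(x) - L x‖ ≤ M‖x‖^p for all x ∈ Ω with ‖x‖ ≤ δ, where L : Y → Y is a continuous linear operator whose spectral radius r(L) = lim_{n→∞} ‖Lⁿ‖^{1/n} satisfies r(L) > 1. Then 0 is an unstable fixed point of T in the following sense: there exists ε₀ > 0 such that the closed ball of radius ε₀ about 0 is contained in Ω and, for every η > 0, there exist y ∈ Ω with ‖y‖ < η and an integer N ≥ 1 such that the iterates T^k(y) are defined and satisfy ‖T^k(y)‖ < ε₀ for all 0 ≤ k < N, while ‖T^N(y)‖ ≥ ε₀. -/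
/-!
Pick `1 < b < r` with `r < b ^ p`. As `r > b`, Banach–Steinhaus yields `x` whose linear orbit
`Lⁿ x` is not `O(bⁿ)`; a small multiple `y` of `x` then has a first time `n` at which `‖Lⁿ y‖`
reaches `c bⁿ = 2ε₀`, while `‖Lʲ y‖ ≤ c bʲ` before. As long as the nonlinear orbit stays in the
`ε₀`-ball, the variation of constants formula `Tᵏ y - Lᵏ y = ∑ Lʲ (T - L) (Tᵏ⁻¹⁻ʲ y)` together
with `∑ ‖Lʲ‖ / b^{pj} < ∞` (because `r < b ^ p`) keeps it within `c bᵏ / 4` of the linear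
orbit when `ε₀` is small, so at time `n` it has left the ball.
-/

open Filter

open Finset in
theorem iterate_sub_pow_apply_eq_sum {R M : Type*} [Semiring R] [TopologicalSpace M]
    [AddCommGroup M] [Module R M] (T : M → M) (L : M →L[R] M) (y : M) (k : ℕ) :
    T^[k] y - (L ^ k) y
      = ∑ j ∈ range k, (L ^ j) (T (T^[k - 1 - j] y) - L (T^[k - 1 - j] y)) := by
  induction k with
  | zero => simp
  | succ k ih =>
    have hstep : T^[k + 1] y - (L ^ (k + 1)) y
        = (T (T^[k] y) - L (T^[k] y)) + L (T^[k] y - (L ^ k) y) := by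
      rw [Function.iterate_succ_apply', pow_succ', mul_apply_eq_comp, map_sub]
      abel
    rw [hstep, ih, map_sum, sum_range_succ', add_comm]
    congr 1
    · refine sum_congr rfl fun j _ => ?_
      rw [pow_succ', mul_apply_eq_comp, show k + 1 - 1 - (j + 1) = k - 1 - j by omega]

section RootTest

variable {u : ℕ → ℝ} {r : ℝ}

theorem eventually_le_pow_of_tendsto_rpow_one_div (hu : ∀ n, 0 ≤ u n)
    (h : Tendsto (fun n : ℕ => u n ^ ((1 : ℝ) / n)) atTop (nhds r)) {β : ℝ} (hβ : r < β) :
    ∀ᶠ n in atTop, u n ≤ β ^ n := by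
  filter_upwards [h.eventually_lt_const hβ, eventually_gt_atTop 0] with n hn hn0
  have hβ0 : 0 ≤ β := (Real.rpow_nonneg (hu n) _).trans hn.le
  rw [one_div] at hn
  simpa using (Real.rpow_inv_le_iff_of_pos (hu n) hβ0 (by positivity)).1 hn.le

theorem eventually_pow_lt_of_tendsto_rpow_one_div (hu : ∀ n, 0 ≤ u n)
    (h : Tendsto (fun n : ℕ => u n ^ ((1 : ℝ) / n)) atTop (nhds r)) {β : ℝ} (hβ0 : 0 ≤ β)
    (hβ : β < r) : ∀ᶠ n in atTop, β ^ n < u n := by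
  filter_upwards [h.eventually_const_lt hβ, eventually_gt_atTop 0] with n hn hn0
  rwa [one_div, Real.lt_rpow_inv_iff_of_pos hβ0 (hu n) (by positivity), Real.rpow_natCast] at hn

theorem summable_div_pow_of_tendsto_rpow_one_div (hu : ∀ n, 0 ≤ u n)
    (h : Tendsto (fun n : ℕ => u n ^ ((1 : ℝ) / n)) atTop (nhds r)) {B : ℝ} (hB : r < B) :
    Summable fun n => u n / B ^ n := by
  obtain ⟨β, hrβ, hβB⟩ := exists_between hB
  have hβ0 : 0 ≤ β := (ge_of_tendsto' h fun n => Real.rpow_nonneg (hu n) _).trans hrβ.le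
  have hB0 : 0 < B := hβ0.trans_lt hβB
  refine Summable.of_norm_bounded_eventually_nat
    (summable_geometric_of_lt_one (div_nonneg hβ0 hB0.le) ((div_lt_one hB0).2 hβB)) ?_
  filter_upwards [eventually_le_pow_of_tendsto_rpow_one_div hu h hrβ] with n hn
  rw [Real.norm_of_nonneg (by have := hu n; positivity), div_pow]
  gcongr

theorem forall_exists_mul_pow_lt_of_tendsto_rpow_one_div (hu : ∀ n, 0 ≤ u n)
    (h : Tendsto (fun n : ℕ => u n ^ ((1 : ℝ) / n)) atTop (nhds r)) {b : ℝ} (hb : 0 < b)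
    (hbr : b < r) (C : ℝ) : ∃ n, C * b ^ n < u n := by
  obtain ⟨β, hbβ, hβr⟩ := exists_between hbr
  have hgrowth : Tendsto (fun n => (β / b) ^ n) atTop atTop :=
    tendsto_pow_atTop_atTop_of_one_lt ((one_lt_div hb).2 hbβ)
  obtain ⟨n, hCn, hn⟩ := ((hgrowth.eventually_gt_atTop C).and
    (eventually_pow_lt_of_tendsto_rpow_one_div hu h (hb.trans hbβ).le hβr)).exists
  refine ⟨n, lt_of_le_of_lt ?_ hn⟩
  rw [div_pow, lt_div_iff₀ (by positivity)] at hCn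
  exact hCn.le

end RootTest

section

variable {E : Type*} [NormedAddCommGroup E] [NormedSpace ℝ E]

theorem exists_forall_exists_mul_pow_lt_norm_pow_apply [CompleteSpace E] (L : E →L[ℝ] E)
    {b : ℝ} (hb : 0 < b) (hL : ∀ C, ∃ n, C * b ^ n < ‖L ^ n‖) :
    ∃ x, ∀ C, ∃ n, C * b ^ n < ‖(L ^ n) x‖ := by
  by_contra! hbdd
  obtain ⟨C, hC⟩ := banach_steinhaus (g := fun n : ℕ => (b ^ n)⁻¹ • L ^ n) fun x => by
    obtain ⟨C, hC⟩ := hbdd x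
    refine ⟨C, fun n => ?_⟩
    rw [smul_apply, norm_smul, norm_inv, norm_pow, Real.norm_of_nonneg hb.le,
      inv_mul_le_iff₀ (by positivity), mul_comm]
    exact hC n
  obtain ⟨n, hn⟩ := hL C
  have := hC n
  rw [norm_smul, norm_inv, norm_pow, Real.norm_of_nonneg hb.le,
    inv_mul_le_iff₀ (by positivity), mul_comm] at this
  exact hn.not_ge this

theorem exists_norm_lt_first_mul_pow_le (L : E →L[ℝ] E) {b A η : ℝ} (hb : 1 ≤ b) (hA : 0 < A)
    (hη : 0 < η) {x : E} (hx : ∀ C, ∃ n, C * b ^ n < ‖(L ^ n) x‖) :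
    ∃ y : E, ‖y‖ < η ∧ ∃ c ≥ 0, ∃ n : ℕ,
      (∀ j < n, ‖(L ^ j) y‖ ≤ c * b ^ j) ∧ c * b ^ n = A ∧ A ≤ ‖(L ^ n) y‖ := by
  classical
  set Q := A * ‖x‖ / η + 1
  have hQ : 0 < Q := by positivity
  have hex : ∃ n, Q * b ^ n ≤ ‖(L ^ n) x‖ := (hx Q).imp fun _ => le_of_lt
  set n := Nat.find hex
  have hbn : 1 ≤ b ^ n := one_le_pow₀ hb
  set s := A / (Q * b ^ n)
  have hs : 0 ≤ s := by positivity
  have hsQ : s * (Q * b ^ n) = A := div_mul_cancel₀ A (by positivity)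
  have hnorm : ∀ j, ‖(L ^ j) (s • x)‖ = s * ‖(L ^ j) x‖ := fun j => by
    rw [map_smul, norm_smul, Real.norm_of_nonneg hs]
  refine ⟨s • x, ?_, s * Q, by positivity, n, fun j hj => ?_, ?_, ?_⟩
  · have hQη : A * ‖x‖ / Q < η := by
      rw [div_lt_iff₀ hQ, mul_comm η]
      exact (div_lt_iff₀ hη).1 (by linarith)
    calc ‖s • x‖ = s * ‖x‖ := by rw [norm_smul, Real.norm_of_nonneg hs]
      _ ≤ A / Q * ‖x‖ := by
        gcongr
        exact div_le_div_of_nonneg_left hA.le hQ (le_mul_of_one_le_right hQ.le hbn)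
      _ < η := by rwa [div_mul_eq_mul_div]
  · rw [hnorm, mul_assoc]
    exact mul_le_mul_of_nonneg_left (not_le.1 (Nat.find_min hex hj)).le hs
  · rw [mul_assoc, hsQ]
  · rw [hnorm, ← hsQ]
    exact mul_le_mul_of_nonneg_left (Nat.find_spec hex) hs

end

theorem exists_one_lt_lt_lt_rpow {r p : ℝ} (hr : 1 < r) (hp : 1 < p) :
    ∃ b, 1 < b ∧ b < r ∧ r < b ^ p := by
  have hrp : r < r ^ p := by simpa using Real.rpow_lt_rpow_of_exponent_lt hr hp
  have hcont := Real.continuousAt_rpow_const r p (Or.inr (by linarith))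
  obtain ⟨b, hbr, hb, hbp⟩ :=
    ((lt_mem_nhds hr).and (hcont.eventually (lt_mem_nhds hrp))).exists_lt
  exact ⟨b, hb, hbr, hbp⟩

theorem mul_pow_rpow {a b : ℝ} (ha : 0 ≤ a) (hb : 0 ≤ b) (j : ℕ) (p : ℝ) :
    (a * b ^ j) ^ p = a ^ p * (b ^ p) ^ j := by
  rw [Real.mul_rpow ha (pow_nonneg hb j), Real.rpow_pow_comm hb]

theorem mul_rpow_le_mul_of_le {K p a z θ : ℝ} (hp : 1 < p) (hK : 0 ≤ K) (hz : 0 ≤ z)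
    (hza : z ≤ a) (hsmall : K * a ^ (p - 1) ≤ θ) : K * z ^ p ≤ θ * z := by
  calc K * z ^ p = K * z ^ (p - 1) * z := by
        rw [mul_assoc, ← Real.rpow_add_one' hz (by linarith), sub_add_cancel]
    _ ≤ K * a ^ (p - 1) * z := by gcongr
    _ ≤ θ * z := by gcongr

open Finset in
theorem norm_iterate_sub_pow_apply_le {𝕜 E : Type*} [NontriviallyNormedField 𝕜]
    [NormedAddCommGroup E] [NormedSpace 𝕜 E] {T : E → E} {L : E →L[𝕜] E} {M p b c C ε : ℝ}
    {y : E} {n : ℕ} (hp : 1 < p) (hb : 1 ≤ b) (hc : 0 ≤ c) (hM : 0 ≤ M)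
    (hC : ∀ k, ∑ i ∈ range k, ‖L ^ i‖ / (b ^ p) ^ i ≤ C)
    (hsmall : M * C * (4 * ε) ^ (p - 1) ≤ 1 / 8) (hcn : c * b ^ n ≤ 2 * ε)
    (happrox : ∀ j < n, ‖T (T^[j] y) - L (T^[j] y)‖ ≤ M * ‖T^[j] y‖ ^ p)
    (hlin : ∀ j < n, ‖(L ^ j) y‖ ≤ c * b ^ j) :
    ∀ k ≤ n, ‖T^[k] y - (L ^ k) y‖ ≤ c * b ^ k / 4 := by
  intro k
  induction k using Nat.strong_induction_on with
  | _ k ih =>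
  intro hkn
  have hb0 : 0 ≤ b := zero_le_one.trans hb
  have hp0 : 0 ≤ p := by linarith
  have hB : 0 < b ^ p := Real.rpow_pos_of_pos (by linarith) p
  have horbit : ∀ j < k, ‖T^[j] y‖ ≤ 2 * c * b ^ j := fun j hj => by
    have := norm_le_norm_add_norm_sub' (T^[j] y) ((L ^ j) y)
    have := mul_nonneg hc (pow_nonneg hb0 j)
    linarith [hlin j (by omega), ih j hj (by omega)]
  have hterm : ∀ j ∈ range k, ‖(L ^ j) (T (T^[k - 1 - j] y) - L (T^[k - 1 - j] y))‖
      ≤ M * (2 * c) ^ p * (b ^ p) ^ (k - 1) * (‖L ^ j‖ / (b ^ p) ^ j) := fun j hj => by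
    have hjk := mem_range.1 hj
    calc _ ≤ ‖L ^ j‖ * (M * ‖T^[k - 1 - j] y‖ ^ p) :=
          (L ^ j).le_opNorm_of_le (happrox _ (by omega))
      _ ≤ ‖L ^ j‖ * (M * (2 * c * b ^ (k - 1 - j)) ^ p) := by
          gcongr; exact horbit _ (by omega)
      _ = M * (2 * c) ^ p * (b ^ p) ^ (k - 1) * (‖L ^ j‖ / (b ^ p) ^ j) := by
          have hsplit : (b ^ p) ^ (k - 1) = (b ^ p) ^ (k - 1 - j) * (b ^ p) ^ j := by
            rw [← pow_add, Nat.sub_add_cancel (by omega)]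
          rw [mul_pow_rpow (by positivity) hb0, hsplit]
          field_simp
  have hC0 : 0 ≤ C := by simpa using hC 0
  calc ‖T^[k] y - (L ^ k) y‖
      ≤ ∑ j ∈ range k, ‖(L ^ j) (T (T^[k - 1 - j] y) - L (T^[k - 1 - j] y))‖ := by
        rw [iterate_sub_pow_apply_eq_sum]; exact norm_sum_le _ _
    _ ≤ ∑ j ∈ range k, M * (2 * c) ^ p * (b ^ p) ^ (k - 1) * (‖L ^ j‖ / (b ^ p) ^ j) :=
        sum_le_sum hterm
    _ ≤ M * (2 * c) ^ p * (b ^ p) ^ (k - 1) * C := by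
        rw [← mul_sum]; exact mul_le_mul_of_nonneg_left (hC k) (by positivity)
    _ = M * C * (2 * c * b ^ (k - 1)) ^ p := by rw [mul_pow_rpow (by positivity) hb0]; ring
    _ ≤ 1 / 8 * (2 * c * b ^ (k - 1)) := by
        refine mul_rpow_le_mul_of_le hp (by positivity) (by positivity) ?_ hsmall
        have : b ^ (k - 1) ≤ b ^ n := pow_le_pow_right₀ hb (by omega)
        nlinarith
    _ ≤ c * b ^ k / 4 := by
        have : b ^ (k - 1) ≤ b ^ k := pow_le_pow_right₀ hb (by omega)
        nlinarith

theorem exists_pos_forall_lt_and_le {α : Type*} [LinearOrder α] {f : ℕ → α} {a : α}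
    (h0 : f 0 < a) (h : ∃ k, a ≤ f k) : ∃ N, 1 ≤ N ∧ (∀ k < N, f k < a) ∧ a ≤ f N := by
  classical
  refine ⟨Nat.find h, Nat.one_le_iff_ne_zero.2 fun hN => ?_,
    fun k hk => not_le.1 (Nat.find_min h hk), Nat.find_spec h⟩
  exact h0.not_ge (hN ▸ Nat.find_spec h)

theorem henry_instability_general {Y : Type*} [NormedAddCommGroup Y] [NormedSpace ℝ Y]
    [CompleteSpace Y] (Ω : Set Y) (hΩ : IsOpen Ω) (h0 : (0:Y) ∈ Ω)
    (T : Y → Y) (p M δ : ℝ) (hp : 1 < p) (hM : 0 < M)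
    (hδ : 0 < δ) (L : Y →L[ℝ] Y)
    (happrox : ∀ x ∈ Ω, ‖x‖ ≤ δ → ‖T x - L x‖ ≤ M * ‖x‖ ^ p)
    (r : ℝ)
    (hrlim : Tendsto (fun n : ℕ => ‖(L ^ n : Y →L[ℝ] Y)‖ ^ ((1:ℝ)/n)) atTop (nhds r))
    (hr : 1 < r) :
    ∃ ε₀ > 0, Metric.closedBall (0:Y) ε₀ ⊆ Ω ∧
      ∀ η > 0, ∃ y ∈ Ω, ‖y‖ < η ∧ ∃ N : ℕ, 1 ≤ N ∧
        (∀ k < N, ‖T^[k] y‖ < ε₀) ∧ ε₀ ≤ ‖T^[N] y‖ := by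
  obtain ⟨b, hb, hbr, hrb⟩ := exists_one_lt_lt_lt_rpow hr hp
  have hnorm : ∀ n, 0 ≤ ‖L ^ n‖ := fun n => norm_nonneg _
  obtain ⟨x, hx⟩ := exists_forall_exists_mul_pow_lt_norm_pow_apply L (by linarith)
    (forall_exists_mul_pow_lt_of_tendsto_rpow_one_div hnorm hrlim (by linarith) hbr)
  set C := ∑' i, ‖L ^ i‖ / (b ^ p) ^ i
  have hC : ∀ k, ∑ i ∈ Finset.range k, ‖L ^ i‖ / (b ^ p) ^ i ≤ C := fun k =>
    (summable_div_pow_of_tendsto_rpow_one_div hnorm hrlim hrb).sum_le_tsum _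
      fun i _ => by positivity
  have hsmall : Tendsto (fun ε : ℝ => M * C * (4 * ε) ^ (p - 1)) (nhds 0) (nhds 0) := by
    have := (((continuous_const_mul (4 : ℝ)).tendsto 0).rpow_const
      (Or.inr (by linarith : (0 : ℝ) ≤ p - 1))).const_mul (M * C)
    rwa [mul_zero, Real.zero_rpow (by linarith), mul_zero] at this
  obtain ⟨ε₀, hε₀, hball, hε₀δ, hε₀small⟩ :=
    ((eventually_closedBall_subset (hΩ.mem_nhds h0)).and ((eventually_le_nhds hδ).and
      (hsmall.eventually_le_const (by norm_num : (0:ℝ) < 1 / 8)))).exists_gt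
  refine ⟨ε₀, hε₀, hball, fun η hη => ?_⟩
  obtain ⟨y, hy, c, hc, n, hlin, hcn, hLn⟩ :=
    exists_norm_lt_first_mul_pow_le L hb.le (by positivity : 0 < 2 * ε₀) (lt_min hη hε₀) hx
  have hmem : ∀ {z : Y}, ‖z‖ ≤ ε₀ → z ∈ Ω := fun hz => hball (mem_closedBall_zero_iff.2 hz)
  have hexit : ∃ k, ε₀ ≤ ‖T^[k] y‖ := by
    by_contra! hstay
    have hdev := norm_iterate_sub_pow_apply_le hp hb.le hc hM.le hC hε₀small hcn.le
      (fun j _ => happrox _ (hmem (hstay j).le) ((hstay j).le.trans hε₀δ)) hlin n le_rfl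
    linarith [norm_sub_norm_le ((L ^ n) y) (T^[n] y), norm_sub_rev ((L ^ n) y) (T^[n] y), hstay n]
  have hy₀ : ‖y‖ < ε₀ := hy.trans_le (min_le_right _ _)
  obtain ⟨N, hN, hbefore, hexitN⟩ :=
    exists_pos_forall_lt_and_le (f := fun k => ‖T^[k] y‖) hy₀ hexit
  exact ⟨y, hmem hy₀.le, hy.trans_le (min_le_left _ _), N, hN, hbefore, hexitN⟩

/-- Instability of a fixed point from linear instability
(Henry–Perez–Wreszinski). If `T(0) = 0`, `T` is well approximated near `0`
by a continuous linear operator `L` with spectral radius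
`r(L) = lim ‖Lⁿ‖^{1/n} > 1`, then `0` is an unstable fixed point of `T`. -/
theorem henry_instability {Y : Type*} [NormedAddCommGroup Y] [NormedSpace ℝ Y]
    [CompleteSpace Y] (Ω : Set Y) (hΩ : IsOpen Ω) (h0 : (0:Y) ∈ Ω)
    (T : Y → Y) (hT0 : T 0 = 0) (p M δ : ℝ) (hp : 1 < p) (hM : 0 < M)
    (hδ : 0 < δ) (L : Y →L[ℝ] Y)
    (happrox : ∀ x ∈ Ω, ‖x‖ ≤ δ → ‖T x - L x‖ ≤ M * ‖x‖ ^ p)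
    (r : ℝ)
    (hrlim : Tendsto (fun n : ℕ => ‖(L ^ n : Y →L[ℝ] Y)‖ ^ ((1:ℝ)/n)) atTop (nhds r))
    (hr : 1 < r) :
    ∃ ε₀ > 0, Metric.closedBall (0:Y) ε₀ ⊆ Ω ∧
      ∀ η > 0, ∃ y ∈ Ω, ‖y‖ < η ∧ ∃ N : ℕ, 1 ≤ N ∧
        (∀ k < N, ‖T^[k] y‖ < ε₀) ∧ ε₀ ≤ ‖T^[N] y‖ :=
  henry_instability_general Ω hΩ h0 T p M δ hp hM hδ L happrox r hrlim hr
end
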